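/- arXiv:2205.13337 — 8 statements merged into one kernel-verified Lean document; each statement's English description precedes it below -/
import Mathlib

section
/- Let f : ℝ → ℝ be continuous and 2π-periodic with Fourier coefficients c_k := (1/2π)∫₀^{2π} f(α)e^{-ikα} dα, and let ω₀ ∈ ℝ be such that f(α) ≠ ω₀² for every α. Fix x ∈ ℝ and set b_m := 1 for m ≠ 0 and b_0 := 1 + x. Then there exists a nonzero u = (u_m)_{m∈ℤ} ∈ ℓ²(ℤ, ℂ) satisfying b_m ∑_{n∈ℤ} c_{m−n} u_n = ω₀² u_m for every m ∈ ℤ if and only if (x/2π)∫₀^{2π} f(α)/(ω₀² − f(α)) dα = 1. -/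
/-!
Fourier coefficients identify `u ∈ ℓ²(ℤ)` with some `U ∈ L²` of the circle, and turn the Laurent
operator `u ↦ ∑ₙ c_{m-n} uₙ` into multiplication by `f`. In these terms the defect equations say that
`(ω₀² - f) U` is the constant `x κ`, where `κ` is the zeroth coefficient of `f U`. As `ω₀² - f`
never vanishes, `U = x κ / (ω₀² - f)`; taking the zeroth coefficient of `f U` again gives
`κ = x κ ⨍ f / (ω₀² - f)`, and `κ ≠ 0` because `U ≠ 0`. Conversely, `U = 1 / (ω₀² - f)` is a mode
as soon as `x ⨍ f / (ω₀² - f) = 1`.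
-/

open scoped Real

open MeasureTheory AddCircle Complex

section FourierL2

variable {T : ℝ} [Fact (0 < T)]

theorem integral_haarAddCircle_eq_intervalIntegral {E : Type*} [NormedAddCommGroup E]
    [NormedSpace ℝ E] (g : AddCircle T → E) :
    ∫ z, g z ∂haarAddCircle = T⁻¹ • ∫ α in (0 : ℝ)..T, g α := by
  rw [integral_haarAddCircle, ← AddCircle.intervalIntegral_preimage T 0, zero_add]

theorem fourierCoeff_sub {E : Type*} [NormedAddCommGroup E] [NormedSpace ℂ E]
    {f g : AddCircle T → E} (hf : Integrable f haarAddCircle)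
    (hg : Integrable g haarAddCircle) :
    fourierCoeff (f - g) = fourierCoeff f - fourierCoeff g := by
  ext n
  simp only [fourierCoeff, Pi.sub_apply, smul_sub]
  exact integral_sub (hf.fourier_smul (-n)) (hg.fourier_smul (-n))

theorem fourierCoeff_const (k : ℂ) :
    fourierCoeff (fun _ : AddCircle T => k) = Pi.single 0 k := by
  ext n
  have h : (fun _ : AddCircle T => k) = fun z => k * fourier 0 z := by simp
  rw [h, fourierCoeff.const_mul, fourierCoeff_fourier]
  simp [Pi.single_apply]

theorem fourierCoeff_zero_eq_integral (f : AddCircle T → ℂ) :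
    fourierCoeff f 0 = ∫ z, f z ∂haarAddCircle := by
  simp [fourierCoeff]

theorem fourierCoeff_mul_fourier (Φ : AddCircle T → ℂ) (n m : ℤ) :
    fourierCoeff (fun z => Φ z * fourier n z) m = fourierCoeff Φ (m - n) := by
  refine integral_congr_ae (.of_forall fun z => ?_)
  have h : fourier (-m) z * fourier n z = fourier (-(m - n)) z := by
    rw [← fourier_add, neg_add_eq_sub, neg_sub]
  simp only [smul_eq_mul, ← h]
  ring

theorem fourierCoeff_eq_iff_ae_eq {f g : AddCircle T → ℂ} (hf : MemLp f 2 haarAddCircle)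
    (hg : MemLp g 2 haarAddCircle) : fourierCoeff f = fourierCoeff g ↔ f =ᵐ[haarAddCircle] g := by
  refine ⟨fun h => ?_, fourierCoeff_congr_ae⟩
  rw [← hf.toLp_eq_toLp_iff hg]
  refine fourierBasis.repr.injective (lp.ext (funext fun n => ?_))
  rw [fourierBasis_repr, fourierBasis_repr, fourierCoeff_congr_ae hf.coeFn_toLp,
    fourierCoeff_congr_ae hg.coeFn_toLp, h]

theorem summable_sq_fourierCoeff {U : AddCircle T → ℂ} (hU : MemLp U 2 haarAddCircle) :
    Summable fun n => ‖fourierCoeff U n‖ ^ 2 := by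
  simpa [fourierCoeff_congr_ae hU.coeFn_toLp] using (hasSum_sq_fourierCoeff (hU.toLp U)).summable

theorem exists_memLp_fourierCoeff_eq {u : ℤ → ℂ} (hu : Summable fun n => ‖u n‖ ^ 2) :
    ∃ U : AddCircle T → ℂ, MemLp U 2 haarAddCircle ∧ fourierCoeff U = u := by
  have hu2 : Memℓp u 2 := memℓp_gen (by simpa using hu)
  refine ⟨fourierBasis.repr.symm ⟨u, hu2⟩, Lp.memLp _, funext fun n => ?_⟩
  rw [← fourierBasis_repr, LinearIsometryEquiv.apply_symm_apply]

theorem memLp_mul_of_continuous (Φ : C(AddCircle T, ℂ)) {U : AddCircle T → ℂ}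
    (hU : MemLp U 2 haarAddCircle) : MemLp (fun z => Φ z * U z) 2 haarAddCircle :=
  hU.mul' (ContinuousMap.memLp (p := ⊤) haarAddCircle ℂ Φ)

theorem inner_toLp_star_mul_fourier (Φ : C(AddCircle T, ℂ)) (m : ℤ)
    (V : Lp ℂ 2 (haarAddCircle (T := T))) :
    inner ℂ (ContinuousMap.toLp 2 haarAddCircle ℂ (star Φ * fourier m)) V =
      fourierCoeff (fun z => Φ z * V z) m := by
  rw [L2.inner_def]
  refine integral_congr_ae ?_
  filter_upwards [ContinuousMap.coeFn_toLp (p := 2) (μ := haarAddCircle) (𝕜 := ℂ)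
    (star Φ * fourier m)] with z hz
  rw [RCLike.inner_apply, hz, ContinuousMap.mul_apply, ContinuousMap.star_apply, map_mul,
    star_def, conj_conj, ← fourier_neg, smul_eq_mul]
  ring

theorem hasSum_fourierCoeff_mul (Φ : C(AddCircle T, ℂ)) {U : AddCircle T → ℂ}
    (hU : MemLp U 2 haarAddCircle) (m : ℤ) :
    HasSum (fun n => fourierCoeff Φ (m - n) * fourierCoeff U n)
      (fourierCoeff (fun z => Φ z * U z) m) := by
  have hsum := (innerSL ℂ (ContinuousMap.toLp 2 haarAddCircle ℂ (star Φ * fourier m))).hasSum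
    (hasSum_fourier_series_L2 (hU.toLp U))
  have hU' := hU.coeFn_toLp
  have hΦU : (fun z => Φ z * hU.toLp U z) =ᵐ[haarAddCircle] fun z => Φ z * U z := by
    filter_upwards [hU'] with z hz
    rw [hz]
  have hΦe : ∀ n, (fun z => Φ z * fourierLp 2 n z) =ᵐ[haarAddCircle] fun z => Φ z * fourier n z :=
    fun n => by
      filter_upwards [coeFn_fourierLp 2 n] with z hz
      rw [hz]
  simp only [innerSL_apply_apply, inner_smul_right, inner_toLp_star_mul_fourier,
    fourierCoeff_congr_ae hU', fourierCoeff_congr_ae hΦU, fourierCoeff_congr_ae (hΦe _),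
    fourierCoeff_mul_fourier] at hsum
  simpa only [mul_comm] using hsum

end FourierL2

section DefectMode

variable {T : ℝ} [Fact (0 < T)] (F : C(AddCircle T, ℂ)) (ω x : ℂ)

theorem defect_equations_iff {U : AddCircle T → ℂ} (hU : MemLp U 2 haarAddCircle) :
    (∀ m : ℤ, (if m = 0 then 1 + x else 1) * fourierCoeff (fun z => F z * U z) m =
        ω * fourierCoeff U m) ↔
      (fun z => (ω - F z) * U z) =ᵐ[haarAddCircle]
        fun _ => x * fourierCoeff (fun z => F z * U z) 0 := by
  have hFU := memLp_mul_of_continuous F hU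
  have hsplit : (fun z => (ω - F z) * U z) = (fun z => ω * U z) - fun z => F z * U z := by
    ext z; simp only [Pi.sub_apply]; ring
  rw [hsplit, ← fourierCoeff_eq_iff_ae_eq ((hU.const_mul ω).sub hFU) (memLp_const _),
    fourierCoeff_sub ((hU.integrable one_le_two).const_mul ω) (hFU.integrable one_le_two),
    fourierCoeff_const, funext_iff]
  refine forall_congr' fun m => ?_
  rw [Pi.sub_apply, fourierCoeff.const_mul]
  rcases eq_or_ne m 0 with rfl | hm
  · simp only [if_true, Pi.single_eq_same]
    constructor <;> intro h <;> linear_combination -h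
  · rw [if_neg hm, one_mul, Pi.single_eq_of_ne hm, sub_eq_zero, eq_comm]

theorem mul_integral_eq_one_of_defect_equations (hF : ∀ z, F z ≠ ω) {U : AddCircle T → ℂ}
    (hU : MemLp U 2 haarAddCircle) (hU0 : fourierCoeff U ≠ 0)
    (h : ∀ m : ℤ, (if m = 0 then 1 + x else 1) * fourierCoeff (fun z => F z * U z) m =
        ω * fourierCoeff U m) :
    x * ∫ z, F z / (ω - F z) ∂haarAddCircle = 1 := by
  set κ := fourierCoeff (fun z => F z * U z) 0
  have hUeq : U =ᵐ[haarAddCircle] fun z => x * κ * (ω - F z)⁻¹ := by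
    filter_upwards [(defect_equations_iff F ω x hU).1 h] with z hz
    rw [← hz]
    field_simp [sub_ne_zero.2 (hF z).symm]
  have hκ : κ = x * κ * ∫ z, F z / (ω - F z) ∂haarAddCircle := by
    calc κ = fourierCoeff (fun z => x * κ * (F z / (ω - F z))) 0 := by
          refine congrFun (fourierCoeff_congr_ae ?_) 0
          filter_upwards [hUeq] with z hz
          rw [hz, div_eq_mul_inv]
          ring
      _ = x * κ * ∫ z, F z / (ω - F z) ∂haarAddCircle := by
          rw [fourierCoeff.const_mul, fourierCoeff_zero_eq_integral]
  have hκ0 : κ ≠ 0 := by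
    intro hκ0
    apply hU0
    rw [fourierCoeff_congr_ae hUeq, hκ0]
    ext n
    simp [fourierCoeff]
  exact mul_left_cancel₀ hκ0 (by linear_combination hκ.symm)

theorem exists_defect_mode_iff (hF : ∀ z, F z ≠ ω) :
    (∃ u : ℤ → ℂ, u ≠ 0 ∧ (Summable fun m => ‖u m‖ ^ 2) ∧
        ∀ m : ℤ, (Summable fun n => fourierCoeff F (m - n) * u n) ∧
          (if m = 0 then 1 + x else 1) * ∑' n, fourierCoeff F (m - n) * u n = ω * u m) ↔
      x * ∫ z, F z / (ω - F z) ∂haarAddCircle = 1 := by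
  constructor
  · rintro ⟨u, hu0, hu2, hu⟩
    obtain ⟨U, hU, rfl⟩ := exists_memLp_fourierCoeff_eq (T := T) hu2
    refine mul_integral_eq_one_of_defect_equations F ω x hF hU hu0 fun m => ?_
    rw [← (hu m).2, (hasSum_fourierCoeff_mul F hU m).tsum_eq]
  · intro h
    have hE : MemLp (fun z => (ω - F z)⁻¹) 2 haarAddCircle :=
      ContinuousMap.memLp haarAddCircle ℂ
        ⟨_, (continuous_const.sub F.continuous).inv₀ fun z => sub_ne_zero.2 (hF z).symm⟩
    have hκ : x * fourierCoeff (fun z => F z * (ω - F z)⁻¹) 0 = 1 := by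
      simpa only [fourierCoeff_zero_eq_integral, div_eq_mul_inv] using h
    have hmode := (defect_equations_iff F ω x hE).2 <| .of_forall fun z =>
      (mul_inv_cancel₀ (sub_ne_zero.2 (hF z).symm)).trans hκ.symm
    refine ⟨_, fun h0 => ?_, summable_sq_fourierCoeff hE, fun m =>
      ⟨(hasSum_fourierCoeff_mul F hE m).summable, ?_⟩⟩
    · have hκ0 : fourierCoeff (fun z => F z * (ω - F z)⁻¹) 0 = 0 := by
        simpa [h0] using (hasSum_fourierCoeff_mul F hE 0).tsum_eq.symm
      simp [hκ0] at hκ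
    · rw [(hasSum_fourierCoeff_mul F hE m).tsum_eq, hmode m]

end DefectMode

instance : Fact (0 < 2 * π) := ⟨Real.two_pi_pos⟩

theorem fourierCoeff_eq_intervalIntegral_two_pi (g : AddCircle (2 * π) → ℂ) (k : ℤ) :
    fourierCoeff g k = 1 / (2 * π) * ∫ α in (0 : ℝ)..(2 * π), g α * exp (-I * k * α) := by
  rw [fourierCoeff_eq_intervalIntegral g k 0, zero_add, real_smul]
  push_cast
  congr 1
  refine intervalIntegral.integral_congr fun α _ => ?_
  rw [fourier_coe_apply, smul_eq_mul, mul_comm]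
  congr 2
  push_cast
  field_simp

/-- equation (4.2): single-defect characterization of localized
modes.  A nonzero ℓ² eigenmode of the singly defected chain at frequency ω₀ with
ω₀² avoiding the band exists iff (x/2π)∫₀^{2π} f(α)/(ω₀² − f(α)) dα = 1. -/
theorem stmt_6
    (f : ℝ → ℝ)
    (hf_cont : Continuous f)
    (hf_per : Function.Periodic f (2 * π))
    (c : ℤ → ℂ)
    (hc : ∀ k : ℤ, c k = (1 / (2 * π)) * ∫ α in (0:ℝ)..(2 * π),
      ((f α : ℂ)) * Complex.exp (-(Complex.I) * (k : ℂ) * (α : ℂ)))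
    (ω₀ : ℝ) (hω₀ : ∀ α : ℝ, f α ≠ ω₀ ^ 2)
    (x : ℝ)
    (b : ℤ → ℝ)
    (hb : ∀ m : ℤ, b m = if m = 0 then 1 + x else 1) :
    (∃ u : ℤ → ℂ, u ≠ 0 ∧ (Summable fun m : ℤ => ‖u m‖ ^ 2) ∧
        ∀ m : ℤ, (Summable fun n : ℤ => c (m - n) * u n) ∧
          (b m : ℂ) * ∑' n : ℤ, c (m - n) * u n = ((ω₀ : ℂ)) ^ 2 * u m) ↔
      (x / (2 * π)) * ∫ α in (0:ℝ)..(2 * π), f α / (ω₀ ^ 2 - f α) = 1 := by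
  let F : C(AddCircle (2 * π), ℂ) :=
    ⟨fun z => (hf_per.lift z : ℂ), continuous_ofReal.comp (hf_cont.quotient_liftOn' _)⟩
  have hF : ∀ α : ℝ, F α = f α := fun α => congrArg ofReal (hf_per.lift_coe α)
  have hFω : ∀ z, F z ≠ (ω₀ : ℂ) ^ 2 := fun z =>
    QuotientAddGroup.induction_on z fun α => by rw [hF]; exact_mod_cast hω₀ α
  have hc' : c = fourierCoeff F := funext fun k => by
    rw [hc, fourierCoeff_eq_intervalIntegral_two_pi]
    simp only [hF]
  have hb' : ∀ m, (b m : ℂ) = if m = 0 then 1 + (x : ℂ) else 1 := fun m => by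
    rw [hb]; split_ifs <;> push_cast <;> rfl
  have hint : ∫ z, F z / ((ω₀ : ℂ) ^ 2 - F z) ∂haarAddCircle =
      ((1 / (2 * π) * ∫ α in (0:ℝ)..(2 * π), f α / (ω₀ ^ 2 - f α) : ℝ) : ℂ) := by
    simp only [integral_haarAddCircle_eq_intervalIntegral, hF, ← ofReal_pow, ← ofReal_sub,
      ← ofReal_div, intervalIntegral.integral_ofReal, real_smul]
    push_cast
    ring
  simp only [hc', hb']
  rw [exists_defect_mode_iff F _ _ hFω, hint, ← ofReal_mul, ← ofReal_one, ofReal_inj]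
  constructor <;> intro h <;> linear_combination h
end

section
/- Let f : ℝ → ℝ be 2π-periodic, Lipschitz continuous, and satisfy 0 < f(α) for all α; set λ* := max_{α∈[0,2π]} f(α) and ω* := √λ*. For ω > ω*, define T⁰(ω) := (1/2π)∫₀^{2π} f(α)/(ω² − f(α)) dα. Then T⁰(ω) → +∞ as ω → ω* from above. -/
open scoped Real
open Filter Topology Set

/-!
Put `M = max f = f x₀` and `c = ω²`. Since `f / (c - f) = c / (c - f) - 1`, it suffices that
`∫ (c - f)⁻¹ → ∞` as `c ↓ M`. Integrating over the period `[x₀, x₀ + 2π]` and using the Lipschitz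
bound `c - f x ≤ (c - M) + K (x - x₀)`, this integral is at least
`K⁻¹ log (1 + 2πK / (c - M))`, which blows up logarithmically.
-/

theorem integral_inv_add_mul_sub {ε K : ℝ} (hε : 0 < ε) (hK : 0 < K) (a : ℝ) {p : ℝ} (hp : 0 ≤ p) :
    ∫ x in a..a + p, (ε + K * (x - a))⁻¹ = K⁻¹ * Real.log ((ε + K * p) / ε) := by
  rw [intervalIntegral.integral_comp_sub_right (fun t => (ε + K * t)⁻¹),
    intervalIntegral.integral_comp_add_mul (fun x => x⁻¹) hK.ne',
    integral_inv_of_pos (by simpa using hε) (by rw [add_sub_cancel_left]; positivity)]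
  simp

theorem tendsto_log_add_mul_div_atTop {K p : ℝ} (hK : 0 < K) (hp : 0 < p) :
    Tendsto (fun ε : ℝ => K⁻¹ * Real.log ((ε + K * p) / ε)) (𝓝[>] 0) atTop := by
  have hratio : Tendsto (fun ε : ℝ => 1 + K * p * ε⁻¹) (𝓝[>] 0) atTop :=
    tendsto_atTop_add_const_left _ 1 (tendsto_inv_nhdsGT_zero.const_mul_atTop (by positivity))
  refine (Real.tendsto_log_atTop.comp hratio).const_mul_atTop (inv_pos.2 hK) |>.congr' ?_
  filter_upwards [self_mem_nhdsWithin] with ε (hε : 0 < ε)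
  simp only [Function.comp_apply]
  congr 2
  field_simp

theorem integral_div_sub_eq_mul_integral_inv_sub {f : ℝ → ℝ} (hf : Continuous f) {c : ℝ}
    (hc : ∀ x, f x ≠ c) (a b : ℝ) :
    ∫ x in a..b, f x / (c - f x) = c * (∫ x in a..b, (c - f x)⁻¹) - (b - a) := by
  have hne : ∀ x, c - f x ≠ 0 := fun x => sub_ne_zero.2 (hc x).symm
  have hint : IntervalIntegrable (fun x => (c - f x)⁻¹) MeasureTheory.volume a b :=
    ((continuous_const.sub hf).inv₀ hne).intervalIntegrable a b
  have hpt : ∀ x, f x / (c - f x) = c * (c - f x)⁻¹ - 1 := fun x => by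
    field_simp [hne x]
    ring
  simp_rw [hpt]
  rw [intervalIntegral.integral_sub (hint.const_mul c) intervalIntegrable_const,
    intervalIntegral.integral_const_mul, intervalIntegral.integral_const, smul_eq_mul, mul_one]

theorem log_le_integral_inv_sub {f : ℝ → ℝ} {p : ℝ} (hper : Function.Periodic f p) (hp : 0 ≤ p)
    {K : NNReal} (hK : 0 < K) (hlip : LipschitzWith K f) {x₀ : ℝ} (hmax : ∀ x, f x ≤ f x₀)
    {c : ℝ} (hc : f x₀ < c) :
    (K : ℝ)⁻¹ * Real.log ((c - f x₀ + K * p) / (c - f x₀)) ≤ ∫ x in 0..p, (c - f x)⁻¹ := by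
  have hgap : 0 < c - f x₀ := sub_pos.2 hc
  have hden : ∀ x, 0 < c - f x := fun x => hgap.trans_le (by linarith [hmax x])
  have hcont : Continuous fun x => (c - f x)⁻¹ :=
    (continuous_const.sub hlip.continuous).inv₀ fun x => (hden x).ne'
  have hper' : Function.Periodic (fun x => (c - f x)⁻¹) p := fun x => by simp only [hper x]
  rw [← zero_add p, ← hper'.intervalIntegral_add_eq x₀ 0, zero_add,
    ← integral_inv_add_mul_sub hgap (NNReal.coe_pos.2 hK) x₀ hp]
  refine intervalIntegral.integral_mono_on (by linarith) ?_ (hcont.intervalIntegrable _ _) ?_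
  · refine ContinuousOn.intervalIntegrable fun x hx => ?_
    rw [uIcc_of_le (by linarith)] at hx
    have : 0 < c - f x₀ + K * (x - x₀) := by nlinarith [hx.1, K.coe_nonneg]
    fun_prop (disch := exact this.ne')
  · intro x hx
    have hfx : f x₀ ≤ f x + K * (x - x₀) := by
      simpa [Real.dist_eq, abs_sub_comm x₀, abs_of_nonneg (sub_nonneg.2 hx.1)] using
        hlip.le_add_mul x₀ x
    exact inv_anti₀ (hden x) (by linarith)

theorem tendsto_integral_inv_sub_atTop {f : ℝ → ℝ} {p : ℝ} (hper : Function.Periodic f p)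
    (hp : 0 < p) {K : NNReal} (hlip : LipschitzWith K f) {M : ℝ} (hM : IsGreatest (range f) M) :
    Tendsto (fun c => ∫ x in 0..p, (c - f x)⁻¹) (𝓝[>] M) atTop := by
  obtain ⟨⟨x₀, rfl⟩, hmax⟩ := hM
  -- `K` itself may vanish, while the logarithmic bound needs a positive constant.
  have hlip' : LipschitzWith (K + 1) f := hlip.weaken le_self_add
  have hgap : Tendsto (fun c => c - f x₀) (𝓝[>] (f x₀)) (𝓝[>] 0) :=
    tendsto_nhdsWithin_of_tendsto_nhds_of_eventually_within _
      (by simpa using ((continuous_sub_right (f x₀)).tendsto (f x₀)).mono_left nhdsWithin_le_nhds)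
      (by filter_upwards [self_mem_nhdsWithin] with c (hc : f x₀ < c) using sub_pos.2 hc)
  refine tendsto_atTop_mono' _ ?_
    ((tendsto_log_add_mul_div_atTop (K := ((K + 1 : NNReal) : ℝ)) (by positivity) hp).comp hgap)
  filter_upwards [self_mem_nhdsWithin] with c (hc : f x₀ < c)
  exact log_le_integral_inv_sub hper hp.le (by positivity) hlip'
    (fun x => hmax (mem_range_self x)) hc

theorem tendsto_sq_nhdsGT_sqrt {a : ℝ} (ha : 0 ≤ a) :
    Tendsto (fun ω : ℝ => ω ^ 2) (𝓝[>] √a) (𝓝[>] a) :=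
  tendsto_nhdsWithin_of_tendsto_nhds_of_eventually_within _
    (by simpa [Real.sq_sqrt ha] using ((continuous_pow 2).tendsto √a).mono_left nhdsWithin_le_nhds)
    (by filter_upwards [self_mem_nhdsWithin] with ω hω using Real.lt_sq_of_sqrt_lt hω)

/-- for a Lipschitz band function f, the single-defect function
T⁰(ω) = (1/2π)∫₀^{2π} f(α)/(ω² − f(α)) dα diverges to +∞ as ω approaches the band
edge ω* = √(max f) from above. -/
theorem stmt_9
    (f : ℝ → ℝ)
    (hf_per : Function.Periodic f (2 * π))
    (L : NNReal) (hf_lip : LipschitzWith L f)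
    (hf_pos : ∀ α : ℝ, 0 < f α)
    (lamStar : ℝ) (hlam : IsGreatest (f '' Set.Icc 0 (2 * π)) lamStar)
    (ωStar : ℝ) (hωStar : ωStar = Real.sqrt lamStar)
    (T0 : ℝ → ℝ)
    (hT0 : ∀ ω : ℝ, ωStar < ω →
      T0 ω = (1 / (2 * π)) * ∫ α in (0:ℝ)..(2 * π), f α / (ω ^ 2 - f α)) :
    Tendsto T0 (nhdsWithin ωStar (Set.Ioi ωStar)) atTop := by
  have h2π : 0 < 2 * π := by positivity
  have hmax : IsGreatest (range f) lamStar := by rwa [← hf_per.image_Icc h2π 0, zero_add]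
  have hlam_pos : 0 < lamStar := by
    obtain ⟨x, hx⟩ := hmax.1
    exact hx ▸ hf_pos x
  subst hωStar
  have hsq := tendsto_sq_nhdsGT_sqrt hlam_pos.le
  have hI := (tendsto_integral_inv_sub_atTop hf_per h2π hf_lip hmax).comp hsq
  have hlim := tendsto_atTop_add_const_right _ (-(2 * π - 0))
    ((hsq.mono_right nhdsWithin_le_nhds).pos_mul_atTop hlam_pos hI)
  refine (hlim.const_mul_atTop (by positivity : 0 < 1 / (2 * π))).congr' ?_
  filter_upwards [self_mem_nhdsWithin] with ω hω
  have hf_ne : ∀ α, f α ≠ ω ^ 2 := fun α =>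
    ((hmax.2 (mem_range_self α)).trans_lt (Real.lt_sq_of_sqrt_lt hω)).ne
  rw [hT0 ω hω, integral_div_sub_eq_mul_integral_inv_sub hf_lip.continuous hf_ne, sub_eq_add_neg]
  rfl
end

section
/- Let f : ℝ → ℝ be 2π-periodic, Lipschitz continuous, and satisfy 0 < f(α) for all α; set λ* := max_{α∈[0,2π]} f(α) and ω* := √λ*. For ω > ω*, define T⁰(ω) := (1/2π)∫₀^{2π} f(α)/(ω² − f(α)) dα. Then T⁰ is continuous and strictly decreasing on (ω*, ∞), and for every x > 0 there exists a unique ω₀ ∈ (ω*, ∞) with x·T⁰(ω₀) = 1. -/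
open scoped Real

open Set MeasureTheory Filter intervalIntegral Topology in
private lemma aux_log_integral (a δ ε K : ℝ) (hK : 0 < K) (hε : 0 < ε) (hδ : 0 ≤ δ) :
    (∫ t in a..(a + δ), 1 / (ε + K * (t - a))) = K⁻¹ * Real.log ((K * δ + ε) / ε) := by
  have step1 : (∫ t in a..(a + δ), 1 / (ε + K * (t - a)))
      = ∫ t in a..(a + δ), (fun u => 1 / u) (K * t + (ε - K * a)) := by
    refine intervalIntegral.integral_congr fun t _ => ?_
    simp only
    ring_nf
  rw [step1, intervalIntegral.integral_comp_mul_add (fun u => 1 / u) hK.ne']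
  have e1 : K * a + (ε - K * a) = ε := by ring
  have e2 : K * (a + δ) + (ε - K * a) = K * δ + ε := by ring
  rw [e1, e2, smul_eq_mul, integral_one_div]
  rw [Set.uIcc_of_le (by nlinarith)]
  intro hmem
  exact absurd hmem.1 (by linarith)

open Set MeasureTheory Filter intervalIntegral Topology in
set_option maxHeartbeats 1600000 in
/-- single-defect existence and uniqueness.  T⁰ is continuous and
strictly decreasing on (ω*, ∞), and for every x > 0 the equation x·T⁰(ω₀) = 1 has a
unique solution ω₀ ∈ (ω*, ∞). -/
theorem stmt_10
    (f : ℝ → ℝ)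
    (hf_per : Function.Periodic f (2 * π))
    (L : NNReal) (hf_lip : LipschitzWith L f)
    (hf_pos : ∀ α : ℝ, 0 < f α)
    (lamStar : ℝ) (hlam : IsGreatest (f '' Set.Icc 0 (2 * π)) lamStar)
    (ωStar : ℝ) (hωStar : ωStar = Real.sqrt lamStar)
    (T0 : ℝ → ℝ)
    (hT0 : ∀ ω : ℝ, ωStar < ω →
      T0 ω = (1 / (2 * π)) * ∫ α in (0:ℝ)..(2 * π), f α / (ω ^ 2 - f α)) :
    ContinuousOn T0 (Set.Ioi ωStar) ∧
    StrictAntiOn T0 (Set.Ioi ωStar) ∧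
    ∀ x : ℝ, 0 < x → ∃! ω₀ : ℝ, ω₀ ∈ Set.Ioi ωStar ∧ x * T0 ω₀ = 1 := by
  have hπ : (0:ℝ) < π := Real.pi_pos
  have h2π : (0:ℝ) < 2 * π := by positivity
  have hc : Continuous f := hf_lip.continuous
  obtain ⟨⟨a0, ha0mem, hfa0⟩, hub⟩ := hlam
  have hlam_pos : 0 < lamStar := hfa0 ▸ hf_pos a0
  have hωs0 : 0 ≤ ωStar := hωStar ▸ Real.sqrt_nonneg _
  have hωs_sq : ωStar ^ 2 = lamStar := by rw [hωStar, Real.sq_sqrt hlam_pos.le]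
  have hfle : ∀ α, f α ≤ lamStar := fun α => by
    obtain ⟨y, hy, hxy⟩ := hf_per.exists_mem_Ico₀ h2π α
    rw [hxy]; exact hub ⟨y, Set.Ico_subset_Icc_self hy, rfl⟩
  have hsq : ∀ ω : ℝ, ωStar < ω → lamStar < ω ^ 2 := fun ω h => by
    calc lamStar = ωStar ^ 2 := hωs_sq.symm
    _ < ω ^ 2 := by nlinarith
  have hden : ∀ ω : ℝ, ωStar < ω → ∀ α, 0 < ω ^ 2 - f α := fun ω h α =>
    sub_pos.2 ((hfle α).trans_lt (hsq ω h))
  have hgcont : ∀ ω : ℝ, ωStar < ω → Continuous (fun α => f α / (ω ^ 2 - f α)) :=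
    fun ω h => hc.div (continuous_const.sub hc) fun α => (hden ω h α).ne'
  have hgint : ∀ ω : ℝ, ωStar < ω → ∀ a b : ℝ,
      IntervalIntegrable (fun α => f α / (ω ^ 2 - f α)) volume a b :=
    fun ω h a b => (hgcont ω h).intervalIntegrable a b
  -- Part 1: continuity
  have hcont : ContinuousOn T0 (Set.Ioi ωStar) := by
    intro ω₀ hω₀
    rw [Set.mem_Ioi] at hω₀
    apply ContinuousAt.continuousWithinAt
    set m : ℝ := (ωStar + ω₀) / 2 with hm
    have hm1 : ωStar < m := by simp only [hm]; linarith
    have hm2 : m < ω₀ := by simp only [hm]; linarith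
    have hm0 : 0 ≤ m := hωs0.trans hm1.le
    have key : ContinuousAt (fun ω => ∫ α in (0:ℝ)..(2 * π), f α / (ω ^ 2 - f α)) ω₀ := by
      apply intervalIntegral.continuousAt_of_dominated_interval
        (bound := fun _ => lamStar / (m ^ 2 - lamStar))
      · filter_upwards [Ioi_mem_nhds hm2] with ω hω
        exact ((hgcont ω (hm1.trans hω)).aestronglyMeasurable)
      · filter_upwards [Ioi_mem_nhds hm2] with ω hω
        refine ae_of_all _ fun t _ => ?_
        have hωm : m < ω := hω
        have hd := hden ω (hm1.trans hωm) t
        rw [Real.norm_eq_abs, abs_of_nonneg (div_nonneg (hf_pos t).le hd.le)]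
        have hdm : 0 < m ^ 2 - lamStar := sub_pos.2 (hsq m hm1)
        exact div_le_div₀ hlam_pos.le (hfle t) hdm (by nlinarith [hfle t])
      · exact intervalIntegrable_const
      · refine ae_of_all _ fun t _ => ?_
        exact continuousAt_const.div ((continuousAt_id.pow 2).sub continuousAt_const)
          (hden ω₀ hω₀ t).ne'
    have heq : T0 =ᶠ[𝓝 ω₀] fun ω => (1 / (2 * π)) * ∫ α in (0:ℝ)..(2 * π), f α / (ω ^ 2 - f α) := by
      filter_upwards [Ioi_mem_nhds hω₀] with ω hω
      exact hT0 ω hω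
    exact ContinuousAt.congr (continuousAt_const.mul key) heq.symm
  -- Part 2: strict antitonicity
  have hanti : StrictAntiOn T0 (Set.Ioi ωStar) := by
    intro a ha b hb hab
    rw [Set.mem_Ioi] at ha hb
    rw [hT0 a ha, hT0 b hb]
    have hpos : 0 < ∫ α in (0:ℝ)..(2 * π),
        (f α / (a ^ 2 - f α) - f α / (b ^ 2 - f α)) := by
      apply intervalIntegral_pos_of_pos_on ((hgint a ha 0 (2*π)).sub (hgint b hb 0 (2*π)))
      · intro t _
        have h1 := hden a ha t
        have hab2 : a ^ 2 < b ^ 2 := by nlinarith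
        exact sub_pos.2 (div_lt_div_of_pos_left (hf_pos t) h1 (by linarith))
      · exact h2π
    rw [intervalIntegral.integral_sub (hgint a ha 0 (2*π)) (hgint b hb 0 (2*π))] at hpos
    have h12π : (0:ℝ) < 1 / (2 * π) := by positivity
    nlinarith [hpos]
  refine ⟨hcont, hanti, ?_⟩
  -- Part 3: existence and uniqueness
  intro x hx
  obtain ⟨K, hKdef⟩ : ∃ K : ℝ, K = (L : ℝ) + 1 := ⟨_, rfl⟩
  have hK : 0 < K := by rw [hKdef]; positivity
  have hlipK : ∀ t : ℝ, lamStar - f t ≤ K * |t - a0| := by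
    intro t
    have hd := hf_lip.dist_le_mul a0 t
    rw [Real.dist_eq, Real.dist_eq] at hd
    calc lamStar - f t = f a0 - f t := by rw [hfa0]
      _ ≤ |f a0 - f t| := le_abs_self _
      _ ≤ (L : ℝ) * |a0 - t| := hd
      _ ≤ K * |t - a0| := by
          rw [abs_sub_comm]
          exact mul_le_mul_of_nonneg_right (by rw [hKdef]; linarith) (abs_nonneg _)
  obtain ⟨δ, hδdef⟩ : ∃ δ : ℝ, δ = min (2 * π) (lamStar / (2 * K)) := ⟨_, rfl⟩
  have hδpos : 0 < δ := hδdef ▸ lt_min h2π (by positivity)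
  have hδ2π : δ ≤ 2 * π := hδdef ▸ min_le_left _ _
  have hδK : K * δ ≤ lamStar / 2 := by
    calc K * δ ≤ K * (lamStar / (2 * K)) :=
          mul_le_mul_of_nonneg_left (hδdef ▸ min_le_right _ _) hK.le
      _ = lamStar / 2 := by field_simp
  obtain ⟨C, hCdef⟩ : ∃ C : ℝ, C = max 1 (4 * π * K / (lamStar * x)) := ⟨_, rfl⟩
  have hC1 : (1:ℝ) ≤ C := hCdef ▸ le_max_left _ _
  have hCx : 4 * π * K / (lamStar * x) ≤ C := hCdef ▸ le_max_right _ _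
  have hexpC : 1 < Real.exp C := by
    have := Real.add_one_le_exp C; linarith
  obtain ⟨ε, hεdef⟩ : ∃ ε : ℝ, ε = K * δ / (Real.exp C - 1) := ⟨_, rfl⟩
  have hε : 0 < ε := hεdef ▸ div_pos (mul_pos hK hδpos) (by linarith)
  obtain ⟨ωlo, hωlodef⟩ : ∃ w : ℝ, w = Real.sqrt (lamStar + ε) := ⟨_, rfl⟩
  have h_lo : ωStar < ωlo := by
    rw [hωStar, hωlodef]
    exact Real.sqrt_lt_sqrt hlam_pos.le (by linarith)
  have h_lo_sq : ωlo ^ 2 = lamStar + ε := by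
    rw [hωlodef, Real.sq_sqrt (by positivity)]
  have hKδ : K * δ = ε * (Real.exp C - 1) := by
    rw [hεdef, div_mul_cancel₀ _ (by linarith : Real.exp C - 1 ≠ 0)]
  -- lower bound : 1/x ≤ T0 ωlo
  have key_lo : 1 / x ≤ T0 ωlo := by
    rw [hT0 ωlo h_lo]
    have gper : Function.Periodic (fun α => f α / (ωlo ^ 2 - f α)) (2 * π) := fun t => by
      simp only [hf_per t]
    have hA : (∫ α in (0:ℝ)..(2 * π), f α / (ωlo ^ 2 - f α))
        = ∫ α in a0..(a0 + 2 * π), f α / (ωlo ^ 2 - f α) := by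
      have := gper.intervalIntegral_add_eq 0 a0
      simpa using this
    have hB : (∫ α in a0..(a0 + δ), f α / (ωlo ^ 2 - f α))
        ≤ ∫ α in a0..(a0 + 2 * π), f α / (ωlo ^ 2 - f α) := by
      rw [← intervalIntegral.integral_add_adjacent_intervals
        (hgint ωlo h_lo a0 (a0 + δ)) (hgint ωlo h_lo (a0 + δ) (a0 + 2 * π))]
      have h0 : 0 ≤ ∫ α in (a0 + δ)..(a0 + 2 * π), f α / (ωlo ^ 2 - f α) :=
        intervalIntegral.integral_nonneg (by linarith)
          (fun t _ => div_nonneg (hf_pos t).le (hden ωlo h_lo t).le)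
      linarith
    have hC' : (∫ t in a0..(a0 + δ), (lamStar / 2) * (1 / (ε + K * (t - a0))))
        ≤ ∫ t in a0..(a0 + δ), f t / (ωlo ^ 2 - f t) := by
      have hci : ContinuousOn (fun t => (lamStar / 2) * (1 / (ε + K * (t - a0))))
          (Set.uIcc a0 (a0 + δ)) := by
        apply ContinuousOn.mul continuousOn_const
        apply ContinuousOn.div continuousOn_const (by fun_prop)
        intro t ht
        rw [Set.uIcc_of_le (by linarith)] at ht
        have h1 : a0 ≤ t := ht.1
        nlinarith [hK]
      apply intervalIntegral.integral_mono_on (by linarith)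
        hci.intervalIntegrable (hgint ωlo h_lo _ _)
      intro t ht
      obtain ⟨ht1, ht2⟩ := ht
      have habs : |t - a0| = t - a0 := abs_of_nonneg (by linarith)
      have h1 : lamStar - f t ≤ K * (t - a0) := by
        have := hlipK t; rwa [habs] at this
      have h2 : K * (t - a0) ≤ K * δ := mul_le_mul_of_nonneg_left (by linarith) hK.le
      have h3 : lamStar / 2 ≤ f t := by nlinarith [hδK, h1, h2]
      have h4 : ωlo ^ 2 - f t ≤ ε + K * (t - a0) := by rw [h_lo_sq]; linarith
      have h5 : 0 < ωlo ^ 2 - f t := hden ωlo h_lo t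
      rw [mul_one_div]
      exact div_le_div₀ (hf_pos t).le h3 h5 h4
    have hD : (∫ t in a0..(a0 + δ), (lamStar / 2) * (1 / (ε + K * (t - a0))))
        = (lamStar / 2) * (K⁻¹ * C) := by
      rw [intervalIntegral.integral_const_mul]
      congr 1
      rw [aux_log_integral a0 δ ε K hK hε hδpos.le]
      have hrat : (K * δ + ε) / ε = Real.exp C := by
        rw [hKδ]; field_simp; ring
      rw [hrat, Real.log_exp]
    have hfinal : 1 / x ≤ (1 / (2 * π)) * ((lamStar / 2) * (K⁻¹ * C)) := by
      have heq : (1 / (2 * π)) * ((lamStar / 2) * (K⁻¹ * (4 * π * K / (lamStar * x))))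
          = 1 / x := by field_simp; ring
      calc (1:ℝ) / x
          = (1 / (2 * π)) * ((lamStar / 2) * (K⁻¹ * (4 * π * K / (lamStar * x)))) := heq.symm
        _ ≤ (1 / (2 * π)) * ((lamStar / 2) * (K⁻¹ * C)) := by gcongr
    calc (1:ℝ) / x ≤ (1 / (2 * π)) * ((lamStar / 2) * (K⁻¹ * C)) := hfinal
      _ ≤ (1 / (2 * π)) * ∫ α in (0:ℝ)..(2 * π), f α / (ωlo ^ 2 - f α) := by
          rw [hA]
          have := hD ▸ (hC'.trans hB)
          gcongr
  -- upper bound : T0 ωhi ≤ 1/x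
  obtain ⟨B, hBdef⟩ : ∃ B : ℝ, B = Real.sqrt (lamStar * (1 + x)) := ⟨_, rfl⟩
  obtain ⟨ωhi, hωhidef⟩ : ∃ w : ℝ, w = max (ωlo + 1) B := ⟨_, rfl⟩
  have hlh : ωlo < ωhi := lt_of_lt_of_le (by linarith) (hωhidef ▸ le_max_left _ _)
  have h_hi : ωStar < ωhi := h_lo.trans hlh
  have h_hi_sq : lamStar * (1 + x) ≤ ωhi ^ 2 := by
    have hB0 : 0 ≤ B := hBdef ▸ Real.sqrt_nonneg _
    have hBsq : B ^ 2 = lamStar * (1 + x) := by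
      rw [hBdef, Real.sq_sqrt (by positivity)]
    have hBle : B ≤ ωhi := hωhidef ▸ le_max_right _ _
    calc lamStar * (1 + x) = B ^ 2 := hBsq.symm
      _ ≤ ωhi ^ 2 := pow_le_pow_left₀ hB0 hBle 2
  have key_hi : T0 ωhi ≤ 1 / x := by
    rw [hT0 ωhi h_hi]
    have hd0 : 0 < ωhi ^ 2 - lamStar := sub_pos.2 (hsq ωhi h_hi)
    have hmono : (∫ α in (0:ℝ)..(2 * π), f α / (ωhi ^ 2 - f α))
        ≤ ∫ _α in (0:ℝ)..(2 * π), lamStar / (ωhi ^ 2 - lamStar) := by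
      apply intervalIntegral.integral_mono_on h2π.le (hgint ωhi h_hi _ _)
        intervalIntegrable_const
      intro t _
      exact div_le_div₀ hlam_pos.le (hfle t) hd0 (by nlinarith [hfle t])
    rw [intervalIntegral.integral_const, smul_eq_mul, sub_zero] at hmono
    have h2 : lamStar / (ωhi ^ 2 - lamStar) ≤ 1 / x := by
      rw [div_le_div_iff₀ hd0 hx]
      nlinarith
    calc (1 / (2 * π)) * ∫ α in (0:ℝ)..(2 * π), f α / (ωhi ^ 2 - f α)
        ≤ (1 / (2 * π)) * ((2 * π) * (lamStar / (ωhi ^ 2 - lamStar))) := by gcongr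
      _ = lamStar / (ωhi ^ 2 - lamStar) := by field_simp
      _ ≤ 1 / x := h2
  -- IVT
  have hsub : Set.Icc ωlo ωhi ⊆ Set.Ioi ωStar := fun t ht => lt_of_lt_of_le h_lo ht.1
  obtain ⟨ω₀, hω₀mem, hω₀eq⟩ :=
    intermediate_value_Icc' hlh.le (hcont.mono hsub) ⟨key_hi, key_lo⟩
  refine ⟨ω₀, ⟨hsub hω₀mem, ?_⟩, ?_⟩
  · rw [hω₀eq]; field_simp
  · rintro ω' ⟨hmem', heq'⟩
    have hT' : T0 ω' = 1 / x := by
      rw [eq_div_iff hx.ne']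
      linear_combination heq'
    exact hanti.injOn hmem' (hsub hω₀mem) (hT'.trans hω₀eq.symm)
end

section
/- Let f : ℝ → ℝ be 2π-periodic, Lipschitz continuous, and satisfy 0 < f(α) for all α; set λ* := max_{α∈[0,2π]} f(α) and ω* := √λ*, and for ω > ω* define T⁰(ω) := (1/2π)∫₀^{2π} f(α)/(ω² − f(α)) dα. For x > 0 let ω₀(x) denote the unique solution in (ω*, ∞) of x·T⁰(ω) = 1. Then x ↦ ω₀(x) is strictly increasing on (0, ∞), ω₀(x) → ω* as x → 0⁺, and ω₀(x) → ∞ as x → ∞. -/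
/-!
For μ above the maximum of f the integrand f/(μ - f) is positive and strictly decreasing in μ,
so T⁰ is positive and strictly decreasing on (ω*, ∞). Since T⁰(ω₀(x)) = 1/x, the map ω₀ is the
inverse of T⁰ composed with x ↦ 1/x, hence increasing; and 1/x → ∞ as x → 0⁺ forces ω₀(x) below
every level above ω*, while 1/x → 0 as x → ∞ forces ω₀(x) above every level.
-/

open scoped Real
open Filter Set Topology

section BandIntegral

variable {f : ℝ → ℝ} {a b lam : ℝ}

lemma continuousOn_div_sub (hf : ContinuousOn f (Icc a b)) (hle : ∀ α ∈ Icc a b, f α ≤ lam)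
    {μ : ℝ} (hμ : lam < μ) : ContinuousOn (fun α => f α / (μ - f α)) (Icc a b) :=
  hf.div (continuousOn_const.sub hf) fun α hα => (sub_pos.2 ((hle α hα).trans_lt hμ)).ne'

lemma integral_div_sub_pos (hab : a < b) (hf : ContinuousOn f (Icc a b))
    (hpos : ∀ α ∈ Icc a b, 0 < f α) (hle : ∀ α ∈ Icc a b, f α ≤ lam) {μ : ℝ} (hμ : lam < μ) :
    0 < ∫ α in a..b, f α / (μ - f α) :=
  intervalIntegral.intervalIntegral_pos_of_pos_on
    ((continuousOn_div_sub hf hle hμ).intervalIntegrable_of_Icc hab.le)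
    (fun α hα => div_pos (hpos α (Ioo_subset_Icc_self hα))
      (sub_pos.2 ((hle α (Ioo_subset_Icc_self hα)).trans_lt hμ)))
    hab

lemma integral_div_sub_lt_of_lt (hab : a < b) (hf : ContinuousOn f (Icc a b))
    (hpos : ∀ α ∈ Icc a b, 0 < f α) (hle : ∀ α ∈ Icc a b, f α ≤ lam) {μ ν : ℝ} (hμ : lam < μ)
    (hμν : μ < ν) : ∫ α in a..b, f α / (ν - f α) < ∫ α in a..b, f α / (μ - f α) := by
  have hlt : ∀ α ∈ Icc a b, f α / (ν - f α) < f α / (μ - f α) := fun α hα =>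
    div_lt_div_of_pos_left (hpos α hα) (sub_pos.2 ((hle α hα).trans_lt hμ)) (by linarith)
  exact intervalIntegral.integral_lt_integral_of_continuousOn_of_le_of_exists_lt hab
    (continuousOn_div_sub hf hle (hμ.trans hμν)) (continuousOn_div_sub hf hle hμ)
    (fun α hα => (hlt α (Ioc_subset_Icc_self hα)).le) ⟨a, left_mem_Icc.2 hab.le, hlt a (left_mem_Icc.2 hab.le)⟩

end BandIntegral

section InverseOfDecreasing

variable {T ω₀ : ℝ → ℝ} {c : ℝ}

lemma StrictAntiOn.lt_iff_lt_inv_of_mul_eq_one (hT : StrictAntiOn T (Ioi c)) {x y : ℝ}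
    (hy : y ∈ Ioi c) (hω₀ : ω₀ x ∈ Ioi c ∧ x * T (ω₀ x) = 1) : ω₀ x < y ↔ T y < x⁻¹ := by
  rw [← hT.lt_iff_gt hy hω₀.1, eq_inv_of_mul_eq_one_right hω₀.2]

lemma StrictAntiOn.lt_iff_inv_lt_of_mul_eq_one (hT : StrictAntiOn T (Ioi c)) {x y : ℝ}
    (hy : y ∈ Ioi c) (hω₀ : ω₀ x ∈ Ioi c ∧ x * T (ω₀ x) = 1) : y < ω₀ x ↔ x⁻¹ < T y := by
  rw [← hT.lt_iff_gt hω₀.1 hy, eq_inv_of_mul_eq_one_right hω₀.2]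

lemma StrictAntiOn.strictMonoOn_of_mul_eq_one (hT : StrictAntiOn T (Ioi c))
    (hω₀ : ∀ x, 0 < x → ω₀ x ∈ Ioi c ∧ x * T (ω₀ x) = 1) : StrictMonoOn ω₀ (Ioi 0) := by
  intro x hx y hy hxy
  rw [hT.lt_iff_lt_inv_of_mul_eq_one (hω₀ y hy).1 (hω₀ x hx),
    eq_inv_of_mul_eq_one_right (hω₀ y hy).2]
  exact inv_strictAntiOn hx hy hxy

lemma StrictAntiOn.tendsto_nhdsGT_of_mul_eq_one (hT : StrictAntiOn T (Ioi c))
    (hω₀ : ∀ x, 0 < x → ω₀ x ∈ Ioi c ∧ x * T (ω₀ x) = 1) : Tendsto ω₀ (𝓝[>] 0) (𝓝 c) := by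
  refine tendsto_order.2 ⟨fun d hd => ?_, fun d hd => ?_⟩
  · filter_upwards [self_mem_nhdsWithin] with x hx
    exact hd.trans (hω₀ x hx).1
  · filter_upwards [self_mem_nhdsWithin, tendsto_inv_nhdsGT_zero.eventually_gt_atTop (T d)]
      with x hx hTx
    exact (hT.lt_iff_lt_inv_of_mul_eq_one hd (hω₀ x hx)).2 hTx

lemma StrictAntiOn.tendsto_atTop_of_mul_eq_one (hT : StrictAntiOn T (Ioi c))
    (hT_pos : ∀ ω ∈ Ioi c, 0 < T ω) (hω₀ : ∀ x, 0 < x → ω₀ x ∈ Ioi c ∧ x * T (ω₀ x) = 1) :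
    Tendsto ω₀ atTop atTop := by
  refine tendsto_atTop.2 fun d => ?_
  have hM : max d (c + 1) ∈ Ioi c := (lt_add_one c).trans_le (le_max_right _ _)
  filter_upwards [eventually_gt_atTop 0,
    tendsto_inv_atTop_zero.eventually (gt_mem_nhds (hT_pos _ hM))] with x hx hTx
  exact (le_max_left _ _).trans ((hT.lt_iff_inv_lt_of_mul_eq_one hM (hω₀ x hx)).2 hTx).le

end InverseOfDecreasing

theorem stmt_11_general
    (f : ℝ → ℝ)
    (L : NNReal) (hf_lip : LipschitzWith L f)
    (hf_pos : ∀ α : ℝ, 0 < f α)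
    (lamStar : ℝ) (hlam : IsGreatest (f '' Set.Icc 0 (2 * π)) lamStar)
    (ωStar : ℝ) (hωStar : ωStar = Real.sqrt lamStar)
    (T0 : ℝ → ℝ)
    (hT0 : ∀ ω : ℝ, ωStar < ω →
      T0 ω = (1 / (2 * π)) * ∫ α in (0:ℝ)..(2 * π), f α / (ω ^ 2 - f α))
    (ω₀ : ℝ → ℝ)
    (hω₀_sol : ∀ x : ℝ, 0 < x → ω₀ x ∈ Set.Ioi ωStar ∧ x * T0 (ω₀ x) = 1) :
    StrictMonoOn ω₀ (Set.Ioi 0) ∧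
    Tendsto ω₀ (nhdsWithin 0 (Set.Ioi 0)) (nhds ωStar) ∧
    Tendsto ω₀ atTop atTop := by
  have h2π : (0 : ℝ) < 2 * π := by positivity
  have hf : ContinuousOn f (Icc 0 (2 * π)) := hf_lip.continuous.continuousOn
  have hpos : ∀ α ∈ Icc 0 (2 * π), 0 < f α := fun α _ => hf_pos α
  have hle : ∀ α ∈ Icc 0 (2 * π), f α ≤ lamStar := fun α hα => hlam.2 ⟨α, hα, rfl⟩
  have hsq : ∀ ω, ωStar < ω → lamStar < ω ^ 2 := fun ω hω =>
    Real.lt_sq_of_sqrt_lt (hωStar ▸ hω)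
  have hT0_anti : StrictAntiOn T0 (Ioi ωStar) := by
    intro ω hω ω' hω' hωω'
    have hωStar_nonneg : 0 ≤ ωStar := hωStar ▸ Real.sqrt_nonneg _
    rw [hT0 ω hω, hT0 ω' hω']
    exact mul_lt_mul_of_pos_left (integral_div_sub_lt_of_lt h2π hf hpos hle (hsq ω hω)
      (pow_lt_pow_left₀ hωω' (hωStar_nonneg.trans hω.le) two_ne_zero)) (by positivity)
  have hT0_pos : ∀ ω ∈ Ioi ωStar, 0 < T0 ω := fun ω hω => by
    rw [hT0 ω hω]
    exact mul_pos (by positivity) (integral_div_sub_pos h2π hf hpos hle (hsq ω hω))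
  exact ⟨hT0_anti.strictMonoOn_of_mul_eq_one hω₀_sol,
    hT0_anti.tendsto_nhdsGT_of_mul_eq_one hω₀_sol,
    hT0_anti.tendsto_atTop_of_mul_eq_one hT0_pos hω₀_sol⟩

/-- the localized frequency x ↦ ω₀(x), defined as the unique
solution in (ω*, ∞) of x·T⁰(ω) = 1, is strictly increasing, tends to the band edge
ω* as x → 0⁺, and tends to ∞ as x → ∞. -/
theorem stmt_11
    (f : ℝ → ℝ)
    (hf_per : Function.Periodic f (2 * π))
    (L : NNReal) (hf_lip : LipschitzWith L f)
    (hf_pos : ∀ α : ℝ, 0 < f α)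
    (lamStar : ℝ) (hlam : IsGreatest (f '' Set.Icc 0 (2 * π)) lamStar)
    (ωStar : ℝ) (hωStar : ωStar = Real.sqrt lamStar)
    (T0 : ℝ → ℝ)
    (hT0 : ∀ ω : ℝ, ωStar < ω →
      T0 ω = (1 / (2 * π)) * ∫ α in (0:ℝ)..(2 * π), f α / (ω ^ 2 - f α))
    (ω₀ : ℝ → ℝ)
    (hω₀_sol : ∀ x : ℝ, 0 < x → ω₀ x ∈ Set.Ioi ωStar ∧ x * T0 (ω₀ x) = 1)
    (hω₀_uniq : ∀ x : ℝ, 0 < x → ∀ ω ∈ Set.Ioi ωStar, x * T0 ω = 1 → ω = ω₀ x) :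
    StrictMonoOn ω₀ (Set.Ioi 0) ∧
    Tendsto ω₀ (nhdsWithin 0 (Set.Ioi 0)) (nhds ωStar) ∧
    Tendsto ω₀ atTop atTop :=
  stmt_11_general f L hf_lip hf_pos lamStar hlam ωStar hωStar T0 hT0 ω₀ hω₀_sol
end

section
/- Let G(y) := −1/(4π|y|) for y ∈ ℝ³ \ {0}, let e₁ = (1,0,0), and let α ∈ ℝ with e^{iα} ≠ 1. Then for every compact set K ⊆ ℝ³ \ ℤe₁, the symmetric partial sums ∑_{|m| ≤ M} G(x − m e₁) e^{iαm} converge uniformly for x ∈ K as M → ∞. -/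
/-!
Subtract the comparison series `∑ G(m e₁) e^{iαm}`. For `‖x‖ ≤ R` and `|m| > 2R` the difference
`|G(x - m e₁) - G(m e₁)|` is at most `R / (2π m²)`, so the difference series converges uniformly
on `K` by the Weierstrass M-test. Pairing `m` with `-m`, the comparison series becomes
`-(4π)⁻¹ ∑ (e^{iαn} + e^{-iαn}) / n`, which converges by Dirichlet's test: the geometric sums of
`e^{±iα}` are bounded because `e^{iα} ≠ 1`.
-/

open scoped Real
open Filter Topology Finset

theorem norm_geom_sum_le {𝕜 : Type*} [NormedDivisionRing 𝕜] {w : 𝕜} (hw : ‖w‖ = 1) (hw1 : w ≠ 1)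
    (n : ℕ) : ‖∑ i ∈ range n, w ^ i‖ ≤ 2 / ‖w - 1‖ := by
  rw [geom_sum_eq hw1, norm_div]
  gcongr
  calc ‖w ^ n - 1‖ ≤ ‖w ^ n‖ + ‖(1 : 𝕜)‖ := norm_sub_le _ _
    _ = 2 := by rw [norm_pow, hw, one_pow, norm_one]; norm_num

theorem cauchySeq_sum_range_pow_succ_div {w : ℂ} (hw : ‖w‖ = 1) (hw1 : w ≠ 1) :
    CauchySeq fun n ↦ ∑ i ∈ range n, ((i : ℝ) + 1)⁻¹ • w ^ (i + 1) := by
  refine Antitone.cauchySeq_series_mul_of_tendsto_zero_of_bounded (b := 2 / ‖w - 1‖) ?_ ?_ ?_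
  · exact fun i j hij ↦ inv_anti₀ (by positivity) (by gcongr)
  · exact tendsto_inv_atTop_zero.comp (tendsto_natCast_atTop_atTop.atTop_add tendsto_const_nhds)
  · intro n
    simpa only [pow_succ', ← mul_sum, norm_mul, hw, one_mul] using norm_geom_sum_le hw hw1 n

theorem sum_Icc_neg_eq_add_sum_range {M : Type*} [AddCommGroup M] (f : ℤ → M) (N : ℕ) :
    ∑ m ∈ Icc (-(N : ℤ)) N, f m = f 0 + ∑ i ∈ range N, (f (i + 1) + f (-(i + 1))) := by
  induction N with
  | zero => simp
  | succ N ih =>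
    rw [Nat.cast_succ, sum_Icc_succ_eq_add_endpoints, ih, sum_range_succ]
    abel

open Complex in
theorem exists_tendsto_sum_Icc_inv_abs_mul_exp {α : ℝ} (hα : exp (I * α) ≠ 1) :
    ∃ L, Tendsto (fun N : ℕ ↦ ∑ m ∈ Icc (-(N : ℤ)) N, ((|(m : ℝ)|⁻¹ : ℝ) : ℂ) * exp (I * α * m))
      atTop (𝓝 L) := by
  refine cauchySeq_tendsto_of_complete ?_
  have hpair : ∀ i : ℕ,
      ((|((i + 1 : ℤ) : ℝ)|⁻¹ : ℝ) : ℂ) * exp (I * α * (i + 1 : ℤ)) +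
        ((|((-(i + 1) : ℤ) : ℝ)|⁻¹ : ℝ) : ℂ) * exp (I * α * (-(i + 1) : ℤ)) =
      ((i : ℝ) + 1)⁻¹ • exp (I * α) ^ (i + 1) +
        ((i : ℝ) + 1)⁻¹ • exp (I * (-α : ℝ)) ^ (i + 1) := by
    intro i
    simp only [← exp_nat_mul, Complex.real_smul]
    push_cast
    rw [abs_neg, abs_of_nonneg (by positivity)]
    push_cast
    ring_nf
  simp_rw [sum_Icc_neg_eq_add_sum_range, hpair, sum_add_distrib]
  have hα' : exp (I * (-α : ℝ)) ≠ 1 := by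
    rwa [ofReal_neg, mul_neg, exp_neg, inv_ne_one]
  exact (cauchySeq_const _).add
    ((cauchySeq_sum_range_pow_succ_div (norm_exp_I_mul_ofReal α) hα).add
      (cauchySeq_sum_range_pow_succ_div (norm_exp_I_mul_ofReal (-α)) hα'))

theorem abs_inv_norm_sub_sub_inv_norm_le {E : Type*} [SeminormedAddCommGroup E] {x y : E} {R : ℝ}
    (hx : ‖x‖ ≤ R) (hy : 2 * R < ‖y‖) : |‖x - y‖⁻¹ - ‖y‖⁻¹| ≤ 2 * R / ‖y‖ ^ 2 := by
  have hR : 0 ≤ R := (norm_nonneg x).trans hx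
  have hb : 0 < ‖y‖ := by linarith
  have hab : |‖x - y‖ - ‖y‖| ≤ R := by
    simpa using (abs_norm_sub_norm_le (x - y) (-y)).trans (by simpa using hx)
  have ha : 0 < ‖x - y‖ := by linarith [(abs_le.mp hab).1]
  calc |‖x - y‖⁻¹ - ‖y‖⁻¹| = |‖x - y‖ - ‖y‖| / (‖x - y‖ * ‖y‖) := by
        rw [inv_sub_inv ha.ne' hb.ne', abs_div, abs_sub_comm, abs_of_pos (mul_pos ha hb)]
    _ ≤ R / (‖y‖ / 2 * ‖y‖) := by gcongr; linarith [(abs_le.mp hab).1]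
    _ = 2 * R / ‖y‖ ^ 2 := by field_simp

theorem exists_tendstoUniformlyOn_sum_Icc_of_eventually_norm_sub_le {X E : Type*}
    [NormedAddCommGroup E] [CompleteSpace E] {f : ℤ → X → E} {c : ℤ → E} {L : E} {u : ℤ → ℝ}
    {K : Set X} (hu : Summable u) (hfu : ∀ᶠ m in cofinite, ∀ x ∈ K, ‖f m x - c m‖ ≤ u m)
    (hc : Tendsto (fun N : ℕ ↦ ∑ m ∈ Icc (-(N : ℤ)) N, c m) atTop (𝓝 L)) :
    ∃ g : X → E, TendstoUniformlyOn (fun (N : ℕ) x ↦ ∑ m ∈ Icc (-(N : ℤ)) N, f m x) g atTop K := by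
  have hdiff := (tendstoUniformlyOn_tsum_of_cofinite_eventually hu hfu).seq_tendstoUniformlyOn _
    tendsto_Icc_neg
  refine ⟨_, (hdiff.add (hc.tendstoUniformlyOn_const K)).congr ?_⟩
  filter_upwards with N x _
  simp

theorem stmt_12_general
    (G : EuclideanSpace ℝ (Fin 3) → ℝ)
    (hG : ∀ y : EuclideanSpace ℝ (Fin 3), G y = -1 / (4 * π * ‖y‖))
    (e₁ : EuclideanSpace ℝ (Fin 3))
    (he₁ : e₁ = EuclideanSpace.single 0 1)
    (α : ℝ) (hα : Complex.exp (Complex.I * (α : ℂ)) ≠ 1)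
    (K : Set (EuclideanSpace ℝ (Fin 3)))
    (hK_cpt : IsCompact K) :
    ∃ g : EuclideanSpace ℝ (Fin 3) → ℂ,
      TendstoUniformlyOn
        (fun (M : ℕ) (x : EuclideanSpace ℝ (Fin 3)) =>
          ∑ m ∈ Finset.Icc (-(M : ℤ)) (M : ℤ),
            ((G (x - (m : ℝ) • e₁) : ℂ)) * Complex.exp (Complex.I * (α : ℂ) * (m : ℂ)))
        g atTop K := by
  obtain ⟨R, hR⟩ := hK_cpt.isBounded.exists_norm_le
  have hlattice : ∀ m : ℤ, ‖(m : ℝ) • e₁‖ = |(m : ℝ)| := fun m ↦ by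
    simp [he₁, norm_smul]
  have hphase : ∀ m : ℤ, ‖Complex.exp (Complex.I * α * m)‖ = 1 := fun m ↦ by
    simpa [mul_assoc] using Complex.norm_exp_I_mul_ofReal (α * m)
  have hG_sub : ∀ x y, G (x - y) - G y = -(4 * π)⁻¹ * (‖x - y‖⁻¹ - ‖y‖⁻¹) := fun x y ↦ by
    rw [hG, hG]; field_simp; ring
  obtain ⟨L, hL⟩ := exists_tendsto_sum_Icc_inv_abs_mul_exp hα
  refine exists_tendstoUniformlyOn_sum_Icc_of_eventually_norm_sub_le
    (c := fun m ↦ (G ((m : ℝ) • e₁) : ℂ) * Complex.exp (Complex.I * α * m))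
    (u := fun m ↦ (4 * π)⁻¹ * (2 * R) * (1 / (m : ℝ) ^ 2))
    ((Real.summable_one_div_int_pow.mpr one_lt_two).mul_left _) ?_
    ((hL.const_mul (-(4 * π : ℂ)⁻¹)).congr fun N ↦ ?_)
  · filter_upwards [(tendsto_norm_cocompact_atTop.comp Int.tendsto_coe_cofinite).eventually_gt_atTop
      (2 * R)] with m hm x hx
    rw [← sub_mul, norm_mul, hphase, mul_one, ← Complex.ofReal_sub, Complex.norm_real, hG_sub,
      norm_mul]
    have hbound := abs_inv_norm_sub_sub_inv_norm_le (hR x hx) (y := (m : ℝ) • e₁) (by rwa [hlattice])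
    rw [norm_neg, norm_inv, Real.norm_eq_abs, Real.norm_eq_abs, abs_of_pos (by positivity),
      mul_assoc, mul_one_div, ← sq_abs, ← hlattice]
    exact mul_le_mul_of_nonneg_left hbound (by positivity)
  · rw [mul_sum]
    refine sum_congr rfl fun m _ ↦ ?_
    rw [hG, hlattice]
    push_cast
    ring

/-- well-definedness of the quasiperiodic Green's function for the
one-dimensional lattice ℤe₁ in three dimensions: if e^{iα} ≠ 1, the symmetric partial
sums ∑_{|m|≤M} G(x − m e₁) e^{iαm} with G(y) = −1/(4π|y|) converge uniformly on every
compact set avoiding the lattice points. -/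
theorem stmt_12
    (G : EuclideanSpace ℝ (Fin 3) → ℝ)
    (hG : ∀ y : EuclideanSpace ℝ (Fin 3), G y = -1 / (4 * π * ‖y‖))
    (e₁ : EuclideanSpace ℝ (Fin 3))
    (he₁ : e₁ = EuclideanSpace.single 0 1)
    (α : ℝ) (hα : Complex.exp (Complex.I * (α : ℂ)) ≠ 1)
    (K : Set (EuclideanSpace ℝ (Fin 3)))
    (hK_cpt : IsCompact K)
    (hK : K ⊆ {x : EuclideanSpace ℝ (Fin 3) | ∀ m : ℤ, x ≠ (m : ℝ) • e₁}) :
    ∃ g : EuclideanSpace ℝ (Fin 3) → ℂ,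
      TendstoUniformlyOn
        (fun (M : ℕ) (x : EuclideanSpace ℝ (Fin 3)) =>
          ∑ m ∈ Finset.Icc (-(M : ℤ)) (M : ℤ),
            ((G (x - (m : ℝ) • e₁) : ℂ)) * Complex.exp (Complex.I * (α : ℂ) * (m : ℂ)))
        g atTop K :=
  stmt_12_general G hG e₁ he₁ α hα K hK_cpt
end

section
/- Let f : ℝ → ℝ be continuous and 2π-periodic with Fourier coefficients c_k := (1/2π)∫₀^{2π} f(α)e^{-ikα} dα, and suppose that for every λ ∈ ℝ the set {α ∈ [0,2π) : f(α) = λ} has Lebesgue measure zero. Let 𝔠 : ℓ²(ℤ,ℂ) → ℓ²(ℤ,ℂ) be the bounded operator (𝔠u)_m := ∑_{n∈ℤ} c_{m−n} u_n. Then 𝔠 has no eigenvalues: if u ∈ ℓ²(ℤ,ℂ) and 𝔠u = λu for some λ ∈ ℂ, then u = 0. -/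
/-!
Under the Fourier isomorphism `ℓ²(ℤ) ≃ L²(AddCircle (2π))` the Laurent operator with coefficients
`c = f̂` becomes multiplication by `f`: the `m`-th Fourier coefficient of `f · U` is
`∑ₙ f̂ (m - n) Û n`. An eigenvector `u` with eigenvalue `λ` therefore gives `f · U = λ U` almost
everywhere, so `U` vanishes outside the level set `{f = λ}`, which is null; hence `U = 0`.
-/

open scoped Real ComplexConjugate InnerProductSpace
open MeasureTheory AddCircle

section FourierCoeff

variable {T : ℝ} [hT : Fact (0 < T)]

theorem fourierCoeff_fourier_mul (g : AddCircle T → ℂ) (j n : ℤ) :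
    fourierCoeff (fun z => fourier j z * g z) n = fourierCoeff g (n - j) := by
  unfold fourierCoeff
  congr 1 with z
  simp only [smul_eq_mul, ← mul_assoc, ← fourier_add]
  congr 3
  ring

theorem fourierCoeff_conj (g : AddCircle T → ℂ) (n : ℤ) :
    fourierCoeff (fun z => conj (g z)) n = conj (fourierCoeff g (-n)) := by
  simp only [fourierCoeff, ← integral_conj, neg_neg, smul_eq_mul, map_mul, fourier_neg]

theorem fourierCoeff_mul_eq_tsum (F : C(AddCircle T, ℂ))
    (U : Lp ℂ 2 (haarAddCircle : Measure (AddCircle T))) (m : ℤ) :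
    fourierCoeff (fun z => F z * U z) m = ∑' n, fourierCoeff F (m - n) * fourierCoeff U n := by
  -- `conj W = fourier (-m) * F`, so the coefficient is `⟪W, U⟫`, which Parseval expands.
  let W : C(AddCircle T, ℂ) := star (fourier (-m) * F)
  have h_inner : fourierCoeff (fun z => F z * U z) m =
      ⟪ContinuousMap.toLp (E := ℂ) 2 haarAddCircle ℂ W, U⟫_ℂ := by
    rw [L2.inner_def]
    refine integral_congr_ae ?_
    filter_upwards [ContinuousMap.coeFn_toLp (E := ℂ) (p := 2) haarAddCircle (𝕜 := ℂ) W] with z hz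
    rw [RCLike.inner_apply, hz, smul_eq_mul]
    change _ = _ * conj (conj (fourier (-m) z * F z))
    rw [Complex.conj_conj]
    ring
  rw [h_inner, ← fourierBasis.tsum_inner_mul_inner]
  congr 1 with n
  rw [← inner_conj_symm, ← HilbertBasis.repr_apply_apply, ← HilbertBasis.repr_apply_apply,
    fourierBasis_repr, fourierBasis_repr, fourierCoeff_toLp]
  change conj (fourierCoeff (fun z => conj (fourier (-m) z * F z)) n) * _ = _
  rw [fourierCoeff_conj, fourierCoeff_fourier_mul, Complex.conj_conj, sub_neg_eq_add,
    neg_add_eq_sub]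

theorem ae_eq_of_fourierCoeff_eq {g h : AddCircle T → ℂ} (hg : MemLp g 2 haarAddCircle)
    (hh : MemLp h 2 haarAddCircle) (hgh : fourierCoeff g = fourierCoeff h) :
    g =ᵐ[haarAddCircle] h := by
  refine (MemLp.toLp_eq_toLp_iff hg hh).1
    (fourierBasis.repr.injective (lp.ext (funext fun n => ?_)))
  rw [fourierBasis_repr, fourierBasis_repr, fourierCoeff_congr_ae hg.coeFn_toLp,
    fourierCoeff_congr_ae hh.coeFn_toLp, hgh]

theorem Function.Periodic.ae_lift_ne {β : Type*} [TopologicalSpace β] [T1Space β] {f : ℝ → β}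
    (hf : Continuous f) (hper : Function.Periodic f T) {b : β}
    (hb : volume {x ∈ Set.Ico 0 T | f x = b} = 0) :
    ∀ᵐ z ∂(haarAddCircle : Measure (AddCircle T)), hper.lift z ≠ b := by
  have hcont : Continuous (hper.lift : AddCircle T → β) := hf.quotient_liftOn' _
  have hS : MeasurableSet {z : AddCircle T | hper.lift z = b} :=
    (isClosed_singleton.preimage hcont).measurableSet
  have hvol : volume {z : AddCircle T | hper.lift z = b} = 0 := by
    rw [← (AddCircle.measurePreserving_mk T 0).measure_preimage hS.nullMeasurableSet, zero_add,
      ← Measure.restrict_congr_set Ico_ae_eq_Ioc,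
      Measure.restrict_apply (AddCircle.measurable_mk' hS)]
    convert hb using 2
    ext x
    simp [and_comm]
  have hac : (haarAddCircle : Measure (AddCircle T)) ≪ volume := by
    rw [volume_eq_smul_haarAddCircle]
    exact Measure.absolutelyContinuous_smul (by simp [hT.out])
  exact ae_iff.2 (hac (by simpa using hvol))

end FourierCoeff

theorem ae_eq_zero_of_mul_ae_eq_mul {α R : Type*} [MeasurableSpace α] {μ : Measure α}
    [MulZeroClass R] [IsRightCancelMulZero R] {F U : α → R} {a : R}
    (hF : ∀ᵐ z ∂μ, F z ≠ a) (h : ∀ᵐ z ∂μ, F z * U z = a * U z) : U =ᵐ[μ] 0 := by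
  filter_upwards [hF, h] with z hFz hz
  by_contra hU
  exact hFz (mul_right_cancel₀ hU hz)

instance Real.fact_zero_lt_two_pi : Fact (0 < 2 * π) := ⟨Real.two_pi_pos⟩

theorem fourierCoeff_eq_intervalIntegral_exp (g : AddCircle (2 * π) → ℂ) (k : ℤ) :
    fourierCoeff g k =
      (1 / (2 * π)) * ∫ α in (0:ℝ)..(2 * π), g α * Complex.exp (-Complex.I * k * α) := by
  rw [fourierCoeff_eq_intervalIntegral g k 0, zero_add, Complex.real_smul]
  push_cast
  congr 1
  refine intervalIntegral.integral_congr fun α _ => ?_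
  rw [fourier_coe_apply, smul_eq_mul, mul_comm]
  congr 2
  field_simp
  push_cast
  ring

/-- the Laurent (lattice) operator 𝔠 with continuous real symbol f
whose level sets all have measure zero has no eigenvalues: any ℓ² solution of
𝔠u = λu is zero.  Hence a perfectly periodic chain supports no localized modes. -/
theorem stmt_13
    (f : ℝ → ℝ)
    (hf_cont : Continuous f)
    (hf_per : Function.Periodic f (2 * π))
    (c : ℤ → ℂ)
    (hc : ∀ k : ℤ, c k = (1 / (2 * π)) * ∫ α in (0:ℝ)..(2 * π),
      ((f α : ℂ)) * Complex.exp (-(Complex.I) * (k : ℂ) * (α : ℂ)))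
    (hlevel : ∀ lam : ℝ, volume {α ∈ Set.Ico (0:ℝ) (2 * π) | f α = lam} = 0)
    (u : ℤ → ℂ)
    (hu : Summable fun m : ℤ => ‖u m‖ ^ 2)
    (lam : ℂ)
    (heig : ∀ m : ℤ, (Summable fun n : ℤ => c (m - n) * u n) ∧
      ∑' n : ℤ, c (m - n) * u n = lam * u m) :
    u = 0 := by
  let F : C(AddCircle (2 * π), ℂ) :=
    ⟨fun z => (hf_per.lift z : ℂ), Complex.continuous_ofReal.comp (hf_cont.quotient_liftOn' _)⟩
  have hF : ∀ k, fourierCoeff F k = c k := fun k => by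
    rw [fourierCoeff_eq_intervalIntegral_exp, hc]
    rfl
  have hmem : Memℓp u 2 := (memℓp_gen_iff (by norm_num)).2 (by simpa using hu)
  let U : Lp ℂ 2 (haarAddCircle : Measure (AddCircle (2 * π))) :=
    fourierBasis.repr.symm ⟨u, hmem⟩
  have hU : ∀ n, fourierBasis.repr U n = u n := fun n => by simp [U]
  have hFU : (fun z => F z * U z) =ᵐ[haarAddCircle] fun z => lam * U z := by
    refine ae_eq_of_fourierCoeff_eq
      ((Lp.memLp U).mul' (BoundedContinuousFunction.mkOfCompact F).memLp_top)
      ((Lp.memLp U).const_mul lam) (funext fun m => ?_)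
    simp only [fourierCoeff_mul_eq_tsum, fourierCoeff.const_mul, ← fourierBasis_repr, hU, hF]
    exact (heig m).2
  have hne : ∀ᵐ z ∂haarAddCircle, F z ≠ lam := by
    filter_upwards [hf_per.ae_lift_ne hf_cont (hlevel lam.re)] with z hz hFz
    exact hz (by simpa [F] using congrArg Complex.re hFz)
  have hU0 : U = 0 := Lp.eq_zero_iff_ae_eq_zero.2 (ae_eq_zero_of_mul_ae_eq_mul hne hFU)
  funext n
  rw [← hU n, hU0, map_zero]
  rfl
end

section
/- Let f : ℝ → ℝ be continuous and 2π-periodic with Fourier coefficients c_k := (1/2π)∫₀^{2π} f(α)e^{-ikα} dα, and let 𝔠 : ℓ²(ℤ,ℂ) → ℓ²(ℤ,ℂ) be the bounded operator (𝔠u)_m := ∑_{n∈ℤ} c_{m−n} u_n. Then 𝔠 is self-adjoint and its spectrum equals the range of f: σ(𝔠) = f([0,2π]). -/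
/-!
The Fourier basis identifies `ℓ²(ℤ)` with `L²` of the circle, and under this identification the
Laurent operator with coefficients `c_k` becomes multiplication by `f`. Multiplication by a
continuous function `φ` is a unital ⋆-homomorphism `C(X, ℂ) → B(L²)`, so it preserves
self-adjointness and can only shrink spectra; since the spectrum of `φ` in `C(X, ℂ)` is its range,
the spectrum of the operator lies in the range of `φ`. Conversely every value `φ x₀` is an
approximate eigenvalue: the indicator of the open set where `φ` is `ε`-close to `φ x₀` has
positive measure and is moved by at most `ε` times its norm.
-/

open MeasureTheory
open scoped Real ENNReal

theorem ContinuousLinearMap.mem_spectrum_of_forall_exists_norm_sub_smul_le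
    {𝕜 E : Type*} [NontriviallyNormedField 𝕜] [NormedAddCommGroup E] [NormedSpace 𝕜 E]
    (A : E →L[𝕜] E) (z : 𝕜) (h : ∀ ε > 0, ∃ x ≠ 0, ‖A x - z • x‖ ≤ ε * ‖x‖) :
    z ∈ spectrum 𝕜 A := by
  rintro ⟨u, hu⟩
  set S : E →L[𝕜] E := ↑u⁻¹
  obtain ⟨x, hx, hAx⟩ := h (‖S‖ + 1)⁻¹ (by positivity)
  have hSx : S (z • x - A x) = x := by
    have := congr($(u.inv_mul) x)
    rw [hu] at this
    simpa [Algebra.algebraMap_eq_smul_one] using this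
  have hlt : ‖S‖ * (‖S‖ + 1)⁻¹ < 1 := by
    rw [← div_eq_mul_inv, div_lt_one (by positivity)]; linarith
  have hle : ‖x‖ ≤ ‖S‖ * (‖S‖ + 1)⁻¹ * ‖x‖ := calc
    ‖x‖ = ‖S (z • x - A x)‖ := by rw [hSx]
    _ ≤ ‖S‖ * ‖A x - z • x‖ := by rw [← norm_neg (A x - _), neg_sub]; exact S.le_opNorm _
    _ ≤ ‖S‖ * ((‖S‖ + 1)⁻¹ * ‖x‖) := by gcongr
    _ = _ := by ring
  exact (mul_lt_of_lt_one_left (norm_pos_iff.mpr hx) hlt).not_ge hle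

namespace ContinuousMap

variable {X : Type*} [TopologicalSpace X] [CompactSpace X] [MeasurableSpace X] [BorelSpace X]
  (μ : Measure X) [IsFiniteMeasure μ]

noncomputable def mulL2Linear : C(X, ℂ) →L[ℂ] Lp ℂ 2 μ →L[ℂ] Lp ℂ 2 μ :=
  (ContinuousLinearMap.mul ℂ ℂ).holderL μ ∞ 2 2 ∘L ContinuousMap.toLp ∞ μ ℂ

variable {μ}

theorem mulL2Linear_coeFn (φ : C(X, ℂ)) (g : Lp ℂ 2 μ) :
    mulL2Linear μ φ g =ᵐ[μ] fun x ↦ φ x * g x := by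
  filter_upwards [(ContinuousLinearMap.mul ℂ ℂ).coeFn_holder (r := 2) (toLp ∞ μ ℂ φ) g,
    coeFn_toLp (p := ∞) (𝕜 := ℂ) μ φ] with x h₁ h₂
  simp only [mulL2Linear, ContinuousLinearMap.comp_apply, ContinuousLinearMap.holderL_apply_apply,
    h₁, ContinuousLinearMap.mul_apply', h₂]

theorem mulL2Linear_one : mulL2Linear μ 1 = 1 := by
  ext1 g
  refine Lp.ext ?_
  filter_upwards [mulL2Linear_coeFn 1 g] with x hx
  simp [hx]

theorem mulL2Linear_mul (φ ψ : C(X, ℂ)) :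
    mulL2Linear μ (φ * ψ) = mulL2Linear μ φ * mulL2Linear μ ψ := by
  ext1 g
  refine Lp.ext ?_
  filter_upwards [mulL2Linear_coeFn (φ * ψ) g, mulL2Linear_coeFn φ (mulL2Linear μ ψ g),
    mulL2Linear_coeFn ψ g] with x h₁ h₂ h₃
  simp [h₁, h₂, h₃, mul_assoc]

theorem mulL2Linear_star (φ : C(X, ℂ)) : mulL2Linear μ (star φ) = star (mulL2Linear μ φ) := by
  rw [ContinuousLinearMap.star_eq_adjoint, ContinuousLinearMap.eq_adjoint_iff]
  intro g h
  rw [L2.inner_def, L2.inner_def]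
  refine integral_congr_ae ?_
  filter_upwards [mulL2Linear_coeFn (star φ) g, mulL2Linear_coeFn φ h] with x h₁ h₂
  simp only [h₁, h₂, star_apply, RCLike.inner_apply, map_mul, RCLike.star_def, Complex.conj_conj]
  ring

variable (μ) in
noncomputable def mulL2 : C(X, ℂ) →⋆ₐ[ℂ] (Lp ℂ 2 μ →L[ℂ] Lp ℂ 2 μ) :=
  { AlgHom.ofLinearMap (mulL2Linear μ).toLinearMap mulL2Linear_one mulL2Linear_mul with
    map_star' := mulL2Linear_star }

theorem mulL2_coeFn (φ : C(X, ℂ)) (g : Lp ℂ 2 μ) : mulL2 μ φ g =ᵐ[μ] fun x ↦ φ x * g x :=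
  mulL2Linear_coeFn φ g

theorem spectrum_mulL2_subset (φ : C(X, ℂ)) : spectrum ℂ (mulL2 μ φ) ⊆ Set.range φ :=
  spectrum_eq_range φ ▸ AlgHom.spectrum_apply_subset (mulL2 μ) φ

theorem isSelfAdjoint_mulL2 {φ : C(X, ℂ)} (hφ : IsSelfAdjoint φ) : IsSelfAdjoint (mulL2 μ φ) :=
  hφ.map _

theorem apply_mem_spectrum_mulL2 [μ.IsOpenPosMeasure] (φ : C(X, ℂ)) (x₀ : X) :
    φ x₀ ∈ spectrum ℂ (mulL2 μ φ) := by
  refine ContinuousLinearMap.mem_spectrum_of_forall_exists_norm_sub_smul_le _ _ fun ε hε ↦ ?_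
  set V := φ ⁻¹' Metric.ball (φ x₀) ε
  have hV : IsOpen V := Metric.isOpen_ball.preimage φ.continuous
  have hμV : μ V ≠ 0 := hV.measure_ne_zero μ ⟨x₀, Metric.mem_ball_self hε⟩
  set g := indicatorConstLp 2 hV.measurableSet (measure_ne_top μ V) (1 : ℂ)
  refine ⟨g, ?_, Lp.norm_le_mul_norm_of_ae_le_mul ?_⟩
  · rw [← norm_pos_iff, norm_indicatorConstLp' two_ne_zero hμV, norm_one, one_mul]
    exact Real.rpow_pos_of_pos (ENNReal.toReal_pos hμV (measure_ne_top μ V)) _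
  filter_upwards [Lp.coeFn_sub (mulL2 μ φ g) (φ x₀ • g), Lp.coeFn_smul (φ x₀) g,
    mulL2_coeFn φ g, indicatorConstLp_coeFn (p := 2) (μ := μ) (hs := hV.measurableSet)
      (hμs := measure_ne_top μ V) (c := (1 : ℂ))] with x h₁ h₂ h₃ h₄
  change ‖(mulL2 μ φ g - φ x₀ • g) x‖ ≤ ε * ‖g x‖
  rw [h₁, Pi.sub_apply, h₂, Pi.smul_apply, smul_eq_mul, h₃, ← sub_mul, norm_mul, h₄]
  by_cases hx : x ∈ V
  · rw [Set.indicator_of_mem hx, ← dist_eq_norm]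
    exact mul_le_mul_of_nonneg_right (Metric.mem_ball.mp hx).le (norm_nonneg _)
  · simp [Set.indicator_of_notMem hx]

theorem spectrum_mulL2 [μ.IsOpenPosMeasure] (φ : C(X, ℂ)) :
    spectrum ℂ (mulL2 μ φ) = Set.range φ :=
  (spectrum_mulL2_subset φ).antisymm <| Set.range_subset_iff.mpr (apply_mem_spectrum_mulL2 φ)

end ContinuousMap

theorem HilbertBasis.hasSum_repr_apply_repr_symm {ι 𝕜 E : Type*} [RCLike 𝕜]
    [NormedAddCommGroup E] [InnerProductSpace 𝕜 E] (b : HilbertBasis ι 𝕜 E) (A : E →L[𝕜] E)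
    (u : lp (fun _ : ι ↦ 𝕜) 2) (m : ι) :
    HasSum (fun n ↦ b.repr (A (b n)) m * u n) (b.repr (A (b.repr.symm u)) m) := by
  simpa [lp.evalCLM, mul_comm] using (b.hasSum_repr_symm u).mapL
    (lp.evalCLM 𝕜 _ 2 m ∘L b.repr.toLinearIsometry.toContinuousLinearMap ∘L A)

theorem fourierBasis_repr_mulL2 {T : ℝ} [Fact (0 < T)] (φ : C(AddCircle T, ℂ)) (m n : ℤ) :
    fourierBasis.repr (ContinuousMap.mulL2 AddCircle.haarAddCircle φ (fourierBasis n)) m =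
      fourierCoeff φ (m - n) := by
  rw [fourierBasis_repr, fourierCoeff, fourierCoeff]
  refine integral_congr_ae ?_
  filter_upwards [ContinuousMap.mulL2_coeFn φ (fourierBasis n),
    coeFn_fourierLp (T := T) 2 n] with x h₁ h₂
  rw [smul_eq_mul, smul_eq_mul, h₁, coe_fourierBasis, h₂, mul_left_comm, ← fourier_add,
    mul_comm, neg_sub, neg_add_eq_sub]

theorem laurent_eq_conjStarAlgEquiv_mulL2 {T : ℝ} [Fact (0 < T)] (φ : C(AddCircle T, ℂ))
    (L : lp (fun _ : ℤ ↦ ℂ) 2 →L[ℂ] lp (fun _ : ℤ ↦ ℂ) 2)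
    (hL : ∀ u m, L u m = ∑' n, fourierCoeff φ (m - n) * u n) :
    L = fourierBasis.repr.conjStarAlgEquiv (ContinuousMap.mulL2 AddCircle.haarAddCircle φ) := by
  ext u m
  rw [hL, LinearIsometryEquiv.conjStarAlgEquiv_apply_apply,
    ← (fourierBasis.hasSum_repr_apply_repr_symm _ u m).tsum_eq]
  simp_rw [fourierBasis_repr_mulL2]

namespace Function.Periodic

variable {E : Type*} [TopologicalSpace E] {f : ℝ → E} {T : ℝ}

def liftContinuousMap (hper : Periodic f T) (hf : Continuous f) : C(AddCircle T, E) :=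
  ⟨hper.lift, continuous_coinduced_dom.mpr hf⟩

@[simp]
theorem liftContinuousMap_coe (hper : Periodic f T) (hf : Continuous f) (α : ℝ) :
    hper.liftContinuousMap hf α = f α :=
  rfl

theorem range_liftContinuousMap (hper : Periodic f T) (hf : Continuous f) :
    Set.range (hper.liftContinuousMap hf) = Set.range f :=
  (QuotientAddGroup.mk_surjective.range_comp _).symm

end Function.Periodic

theorem fourier_coe_apply_two_pi (k : ℤ) (α : ℝ) :
    fourier k (α : AddCircle (2 * π)) = Complex.exp (Complex.I * k * α) := by
  rw [fourier_coe_apply]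
  congr 1
  field_simp
  push_cast
  ring

/-- the Laurent operator 𝔠 on ℓ²(ℤ,ℂ) with continuous real-valued
2π-periodic symbol f is self-adjoint and its spectrum equals the range f([0,2π]) of
the band function. -/
theorem stmt_14
    (f : ℝ → ℝ)
    (hf_cont : Continuous f)
    (hf_per : Function.Periodic f (2 * π))
    (c : ℤ → ℂ)
    (hc : ∀ k : ℤ, c k = (1 / (2 * π)) * ∫ α in (0:ℝ)..(2 * π),
      ((f α : ℂ)) * Complex.exp (-(Complex.I) * (k : ℂ) * (α : ℂ)))
    (T : lp (fun _ : ℤ => ℂ) 2 →L[ℂ] lp (fun _ : ℤ => ℂ) 2)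
    (hT : ∀ (u : lp (fun _ : ℤ => ℂ) 2) (m : ℤ),
      (Summable fun n : ℤ => c (m - n) * u n) ∧
        (T u) m = ∑' n : ℤ, c (m - n) * u n) :
    IsSelfAdjoint T ∧
      spectrum ℂ T = (fun r : ℝ => (r : ℂ)) '' (f '' Set.Icc 0 (2 * π)) := by
  have : Fact (0 < 2 * π) := ⟨by positivity⟩
  set F : C(AddCircle (2 * π), ℂ) :=
    (⟨Complex.ofReal, Complex.continuous_ofReal⟩ : C(ℝ, ℂ)).comp (hf_per.liftContinuousMap hf_cont)
  have hF : IsSelfAdjoint F := by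
    ext x
    simp [F]
  have hcF : ∀ k, c k = fourierCoeff F k := fun k ↦ by
    rw [hc, fourierCoeff_eq_intervalIntegral F k 0, zero_add, Complex.real_smul]
    push_cast
    congr 1
    refine intervalIntegral.integral_congr fun α _ ↦ ?_
    rw [smul_eq_mul, fourier_coe_apply_two_pi, mul_comm]
    congr 2
    push_cast
    ring
  have hTF :
      T = fourierBasis.repr.conjStarAlgEquiv (ContinuousMap.mulL2 AddCircle.haarAddCircle F) :=
    laurent_eq_conjStarAlgEquiv_mulL2 F T fun u m ↦ by simp_rw [(hT u m).2, hcF]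
  refine ⟨hTF ▸ (ContinuousMap.isSelfAdjoint_mulL2 hF).map _, ?_⟩
  rw [hTF, AlgEquiv.spectrum_eq, ContinuousMap.spectrum_mulL2, ContinuousMap.coe_comp,
    Set.range_comp, Function.Periodic.range_liftContinuousMap,
    ← hf_per.image_Icc (by positivity) 0, zero_add]
  rfl
end

section
/- Let N ≥ 1, let C : ℝ → M_N(ℂ) be continuous and 2π-periodic, and let ω ∈ ℝ be such that C(α) − ω²·I is invertible for every α. Fix M ≥ 0 and diagonal N×N complex matrices X_0, …, X_M such that I + X_m is invertible for each m. Define T^k(ω) := −(1/2π)∫₀^{2π} e^{ikα} C(α)(C(α) − ω²·I)^{-1} dα and T̃^k(ω) := (1/2π)∫₀^{2π} e^{ikα} (C(α) − ω²·I)^{-1} dα; let 𝒯(ω) and 𝒯̃(ω) be the (M+1)×(M+1) block matrices with (i,j) blocks T^{j−i}(ω) and T̃^{j−i}(ω) respectively; let 𝒳 be block-diagonal with blocks X_m and let 𝒴 be block-diagonal with blocks Y_m := (I + X_m)^{-1} − I. Then det(I − 𝒳𝒯(ω)) = det(I + 𝒳)·det(I − ω²𝒴𝒯̃(ω)); in particular,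 det(I − 𝒳𝒯(ω)) = 0 if and only if det(I − ω²𝒴𝒯̃(ω)) = 0. -/
/-!
Since `C (C - ω²)⁻¹ = 1 + ω² (C - ω²)⁻¹` pointwise, taking Fourier coefficients gives
`T^k = -(δ_{k0} + ω² T̃^k)`, i.e. `𝒯 = -(1 + ω² 𝒯̃)`. Blockwise, `(1 + X_m) Y_m = -X_m`, so
`(1 + 𝒳) 𝒴 = -𝒳` and hence `1 - 𝒳 𝒯 = 1 + 𝒳 + ω² 𝒳 𝒯̃ = (1 + 𝒳)(1 - ω² 𝒴 𝒯̃)`.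
Taking determinants gives the identity, and `det (1 + 𝒳) ≠ 0` gives the equivalence.
-/

open scoped Real
open Matrix Complex

section MatrixInverse

variable {n K : Type*} [Fintype n] [DecidableEq n] [Field K]

lemma Matrix.mul_inv_sub_smul_one (A : Matrix n n K) (c : K) (h : IsUnit (A - c • 1)) :
    A * (A - c • 1)⁻¹ = 1 + c • (A - c • 1)⁻¹ := by
  calc A * (A - c • 1)⁻¹ = (A - c • 1 + c • 1) * (A - c • 1)⁻¹ := by rw [sub_add_cancel]
    _ = 1 + c • (A - c • 1)⁻¹ := by
      rw [add_mul, mul_nonsing_inv _ ((isUnit_iff_isUnit_det _).1 h), smul_mul, one_mul]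

theorem Continuous.matrix_inv_of_isUnit {X : Type*} [TopologicalSpace X] [TopologicalSpace K]
    [IsTopologicalDivisionRing K] {A : X → Matrix n n K} (hA : Continuous A)
    (h : ∀ x, IsUnit (A x)) : Continuous fun x => (A x)⁻¹ := by
  refine continuous_iff_continuousAt.2 fun x => (continuousAt_matrix_inv _ ?_).comp hA.continuousAt
  rw [Ring.inverse_eq_inv']
  exact continuousAt_inv₀ ((isUnit_iff_isUnit_det _).1 (h x)).ne_zero

end MatrixInverse

theorem integral_exp_I_int_mul (k : ℤ) :
    ∫ α in (0:ℝ)..(2 * π), exp (I * k * α) = if k = 0 then ((2 * π : ℝ) : ℂ) else 0 := by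
  split_ifs with hk
  · simp [hk]
  · have hc : I * k ≠ 0 := mul_ne_zero I_ne_zero (Int.cast_ne_zero.2 hk)
    have h2π : I * k * ((2 * π : ℝ) : ℂ) = k * (2 * π * I) := by push_cast; ring
    simp only [integral_exp_mul_complex hc, h2π, exp_int_mul_two_pi_mul_I]
    simp

-- Fourier coefficients with kernel `e^{ikα}`, the opposite sign to Mathlib's `fourierCoeffOn`.
theorem fourierCoeff_const_add_mul (k : ℤ) (a c : ℂ) {f : ℝ → ℂ} (hf : Continuous f) :
    (1 / (2 * π)) * ∫ α in (0:ℝ)..(2 * π), exp (I * k * α) * (a + c * f α)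
      = (if k = 0 then a else 0)
        + c * ((1 / (2 * π)) * ∫ α in (0:ℝ)..(2 * π), exp (I * k * α) * f α) := by
  have hsplit : ∀ α : ℝ, exp (I * k * α) * (a + c * f α)
      = a * exp (I * k * α) + c * (exp (I * k * α) * f α) := fun α => by ring
  simp_rw [hsplit]
  rw [intervalIntegral.integral_add
      ((by fun_prop : Continuous fun α : ℝ => a * exp (I * k * α)).intervalIntegrable _ _)
      ((by fun_prop : Continuous fun α : ℝ => c * (exp (I * k * α) * f α)).intervalIntegrable _ _),
    intervalIntegral.integral_const_mul, intervalIntegral.integral_const_mul,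
    integral_exp_I_int_mul]
  have hπ : (π : ℂ) ≠ 0 := ofReal_ne_zero.2 Real.pi_ne_zero
  split_ifs
  · push_cast; field_simp
  · simp only [mul_zero, zero_add]; ring

lemma fourierCoeff_mul_inv_sub_smul_one {n : Type*} [Fintype n] [DecidableEq n]
    {C : ℝ → Matrix n n ℂ} (hC : Continuous C) {c : ℂ} (hc : ∀ α, IsUnit (C α - c • 1))
    (k : ℤ) (i j : n) :
    (1 / (2 * π)) * ∫ α in (0:ℝ)..(2 * π), exp (I * k * α) * (C α * (C α - c • 1)⁻¹) i j
      = (if k = 0 then (1 : Matrix n n ℂ) i j else 0)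
        + c * ((1 / (2 * π)) * ∫ α in (0:ℝ)..(2 * π), exp (I * k * α) * (C α - c • 1)⁻¹ i j) := by
  have hinv : Continuous fun α => (C α - c • 1)⁻¹ :=
    (hC.sub continuous_const).matrix_inv_of_isUnit hc
  have hpt : ∀ α, (C α * (C α - c • 1)⁻¹) i j = (1 : Matrix n n ℂ) i j + c * (C α - c • 1)⁻¹ i j :=
    fun α => by rw [mul_inv_sub_smul_one _ _ (hc α)]; rfl
  simp_rw [hpt]
  exact fourierCoeff_const_add_mul k _ _ (hinv.matrix_elem i j)

section BlockToeplitz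

variable {n R : Type*} [CommRing R]

def blockToeplitz (m : ℕ) : (ℤ → Matrix n n R) →ₗ[R] Matrix (Fin m × n) (Fin m × n) R where
  toFun T p q := T (((q.1 : ℕ) : ℤ) - ((p.1 : ℕ) : ℤ)) p.2 q.2
  map_add' _ _ := rfl
  map_smul' _ _ := rfl

lemma blockToeplitz_apply (m : ℕ) (T : ℤ → Matrix n n R) (p q : Fin m × n) :
    blockToeplitz m T p q = T (((q.1 : ℕ) : ℤ) - ((p.1 : ℕ) : ℤ)) p.2 q.2 := rfl

lemma blockToeplitz_single_zero_one [DecidableEq n] (m : ℕ) :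
    blockToeplitz m (Pi.single 0 (1 : Matrix n n R)) = 1 := by
  ext ⟨a, i⟩ ⟨b, j⟩
  have hab : ((b : ℕ) : ℤ) - ((a : ℕ) : ℤ) = 0 ↔ a = b := by
    rw [sub_eq_zero, Nat.cast_inj, Fin.val_inj, eq_comm]
  by_cases h : a = b
  · subst h; simp [blockToeplitz_apply, one_apply]
  · simp [blockToeplitz_apply, one_apply, hab, h]

end BlockToeplitz

section BlockDiagonal

variable {n o R : Type*} [Fintype n] [DecidableEq n] [Fintype o] [DecidableEq o] [CommRing R]

/-- Block-diagonal matrix with the block index as the *first* coordinate, unlike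
`Matrix.blockDiagonal`. -/
def blockDiagonalFst : (o → Matrix n n R) →+* Matrix (o × n) (o × n) R :=
  (reindexAlgEquiv R R (Equiv.prodComm n o)).toRingHom.comp (blockDiagonalRingHom n o R)

lemma blockDiagonalFst_apply (F : o → Matrix n n R) (p q : o × n) :
    blockDiagonalFst F p q = if p.1 = q.1 then F p.1 p.2 q.2 else 0 := rfl

lemma one_add_blockDiagonalFst_mul (F : o → Matrix n n R) (hF : ∀ m, IsUnit (1 + F m)) :
    (1 + blockDiagonalFst F) * blockDiagonalFst (fun m => (1 + F m)⁻¹ - 1)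
      = -blockDiagonalFst F := by
  have hblock : ∀ m, (1 + F m) * ((1 + F m)⁻¹ - 1) = -F m := fun m => by
    rw [mul_sub, mul_nonsing_inv _ ((isUnit_iff_isUnit_det _).1 (hF m)), mul_one]
    abel
  rw [← map_one blockDiagonalFst, ← map_add, ← map_mul, ← map_neg]
  exact congrArg _ (funext hblock)

lemma isUnit_one_add_blockDiagonalFst (F : o → Matrix n n R) (hF : ∀ m, IsUnit (1 + F m)) :
    IsUnit (1 + blockDiagonalFst F) := by
  rw [← map_one blockDiagonalFst, ← map_add]
  exact (Pi.isUnit_iff.2 hF).map _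

end BlockDiagonal

lemma one_sub_mul_neg_one_add_smul {R A : Type*} [CommRing R] [Ring A] [Algebra R A]
    (X Y T : A) (c : R) (hXY : (1 + X) * Y = -X) :
    1 - X * -(1 + c • T) = (1 + X) * (1 - c • (Y * T)) := by
  rw [mul_sub, mul_one, mul_smul_comm, ← mul_assoc, hXY, neg_mul, smul_neg, mul_neg, mul_add,
    mul_one, mul_smul_comm]
  abel

theorem stmt_16_general
    (N : ℕ)
    (C : ℝ → Matrix (Fin N) (Fin N) ℂ)
    (hC_cont : Continuous C)
    (ω : ℝ)
    (hω : ∀ α : ℝ, IsUnit (C α - ((ω : ℂ) ^ 2) • (1 : Matrix (Fin N) (Fin N) ℂ)))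
    (M : ℕ)
    (X : ℤ → Matrix (Fin N) (Fin N) ℂ)
    (hX_inv : ∀ m : ℤ, IsUnit (1 + X m))
    (T Ttilde : ℤ → Matrix (Fin N) (Fin N) ℂ)
    (hT : ∀ (k : ℤ) (i j : Fin N),
      T k i j = -((1 / (2 * π)) * ∫ α in (0:ℝ)..(2 * π),
        Complex.exp (Complex.I * (k : ℂ) * (α : ℂ)) *
          ((C α) * (C α - ((ω : ℂ) ^ 2) • (1 : Matrix (Fin N) (Fin N) ℂ))⁻¹) i j))
    (hTtilde : ∀ (k : ℤ) (i j : Fin N),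
      Ttilde k i j = (1 / (2 * π)) * ∫ α in (0:ℝ)..(2 * π),
        Complex.exp (Complex.I * (k : ℂ) * (α : ℂ)) *
          ((C α - ((ω : ℂ) ^ 2) • (1 : Matrix (Fin N) (Fin N) ℂ))⁻¹) i j)
    (𝒯 𝒯tilde 𝒳 𝒴 : Matrix (Fin (M+1) × Fin N) (Fin (M+1) × Fin N) ℂ)
    (h𝒯 : ∀ p q : Fin (M+1) × Fin N,
      𝒯 p q = T (((q.1 : ℕ) : ℤ) - ((p.1 : ℕ) : ℤ)) p.2 q.2)
    (h𝒯tilde : ∀ p q : Fin (M+1) × Fin N,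
      𝒯tilde p q = Ttilde (((q.1 : ℕ) : ℤ) - ((p.1 : ℕ) : ℤ)) p.2 q.2)
    (h𝒳 : ∀ p q : Fin (M+1) × Fin N,
      𝒳 p q = if p.1 = q.1 then X ((p.1 : ℕ) : ℤ) p.2 q.2 else 0)
    (h𝒴 : ∀ p q : Fin (M+1) × Fin N,
      𝒴 p q = if p.1 = q.1 then ((1 + X ((p.1 : ℕ) : ℤ))⁻¹ - 1) p.2 q.2 else 0) :
    (1 - 𝒳 * 𝒯).det = (1 + 𝒳).det * (1 - ((ω : ℂ) ^ 2) • (𝒴 * 𝒯tilde)).det ∧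
      ((1 - 𝒳 * 𝒯).det = 0 ↔ (1 - ((ω : ℂ) ^ 2) • (𝒴 * 𝒯tilde)).det = 0) := by
  have hT_eq : T = -(Pi.single 0 1 + ((ω : ℂ) ^ 2) • Ttilde) := by
    ext k i j
    rw [hT, fourierCoeff_mul_inv_sub_smul_one hC_cont hω, ← hTtilde]
    rcases eq_or_ne k 0 with rfl | hk <;> simp [*]
  have h𝒯_eq : 𝒯 = -(1 + ((ω : ℂ) ^ 2) • 𝒯tilde) := by
    have h𝒯' : 𝒯 = blockToeplitz (M + 1) T :=
      Matrix.ext fun p q => (h𝒯 p q).trans (blockToeplitz_apply _ _ p q).symm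
    have h𝒯tilde' : 𝒯tilde = blockToeplitz (M + 1) Ttilde :=
      Matrix.ext fun p q => (h𝒯tilde p q).trans (blockToeplitz_apply _ _ p q).symm
    rw [h𝒯', h𝒯tilde', hT_eq, map_neg, map_add, map_smul, blockToeplitz_single_zero_one]
  set F : Fin (M + 1) → Matrix (Fin N) (Fin N) ℂ := fun m => X ((m : ℕ) : ℤ)
  set G : Fin (M + 1) → Matrix (Fin N) (Fin N) ℂ := fun m => (1 + F m)⁻¹ - 1
  have h𝒳' : 𝒳 = blockDiagonalFst F :=
    Matrix.ext fun p q => (h𝒳 p q).trans (blockDiagonalFst_apply F p q).symm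
  have h𝒴' : 𝒴 = blockDiagonalFst G :=
    Matrix.ext fun p q => (h𝒴 p q).trans (blockDiagonalFst_apply G p q).symm
  have hXY : (1 + 𝒳) * 𝒴 = -𝒳 := by
    rw [h𝒳', h𝒴']
    exact one_add_blockDiagonalFst_mul F fun m => hX_inv _
  have hdet : (1 + 𝒳).det ≠ 0 := by
    rw [h𝒳', ← isUnit_iff_ne_zero, ← isUnit_iff_isUnit_det]
    exact isUnit_one_add_blockDiagonalFst F fun m => hX_inv _
  have hfactor := one_sub_mul_neg_one_add_smul 𝒳 𝒴 𝒯tilde ((ω : ℂ) ^ 2) hXY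
  rw [← h𝒯_eq] at hfactor
  rw [hfactor, det_mul, mul_eq_zero]
  exact ⟨rfl, or_iff_right hdet⟩

/-- remark after Proposition 3.5: equivalence of the two Toeplitz
characterizations: det(I − 𝒳𝒯(ω)) = det(I + 𝒳)·det(I − ω²𝒴𝒯̃(ω)), so the two
determinant conditions vanish simultaneously. -/
theorem stmt_16
    (N : ℕ) (hN : 1 ≤ N)
    (C : ℝ → Matrix (Fin N) (Fin N) ℂ)
    (hC_cont : Continuous C)
    (hC_per : Function.Periodic C (2 * π))
    (ω : ℝ)
    (hω : ∀ α : ℝ, IsUnit (C α - ((ω : ℂ) ^ 2) • (1 : Matrix (Fin N) (Fin N) ℂ)))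
    (M : ℕ)
    (X : ℤ → Matrix (Fin N) (Fin N) ℂ)
    (hX_diag : ∀ m : ℤ, (X m).IsDiag)
    (hX_supp : ∀ m : ℤ, (m < 0 ∨ (M : ℤ) < m) → X m = 0)
    (hX_inv : ∀ m : ℤ, IsUnit (1 + X m))
    (T Ttilde : ℤ → Matrix (Fin N) (Fin N) ℂ)
    (hT : ∀ (k : ℤ) (i j : Fin N),
      T k i j = -((1 / (2 * π)) * ∫ α in (0:ℝ)..(2 * π),
        Complex.exp (Complex.I * (k : ℂ) * (α : ℂ)) *
          ((C α) * (C α - ((ω : ℂ) ^ 2) • (1 : Matrix (Fin N) (Fin N) ℂ))⁻¹) i j))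
    (hTtilde : ∀ (k : ℤ) (i j : Fin N),
      Ttilde k i j = (1 / (2 * π)) * ∫ α in (0:ℝ)..(2 * π),
        Complex.exp (Complex.I * (k : ℂ) * (α : ℂ)) *
          ((C α - ((ω : ℂ) ^ 2) • (1 : Matrix (Fin N) (Fin N) ℂ))⁻¹) i j)
    (𝒯 𝒯tilde 𝒳 𝒴 : Matrix (Fin (M+1) × Fin N) (Fin (M+1) × Fin N) ℂ)
    (h𝒯 : ∀ p q : Fin (M+1) × Fin N,
      𝒯 p q = T (((q.1 : ℕ) : ℤ) - ((p.1 : ℕ) : ℤ)) p.2 q.2)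
    (h𝒯tilde : ∀ p q : Fin (M+1) × Fin N,
      𝒯tilde p q = Ttilde (((q.1 : ℕ) : ℤ) - ((p.1 : ℕ) : ℤ)) p.2 q.2)
    (h𝒳 : ∀ p q : Fin (M+1) × Fin N,
      𝒳 p q = if p.1 = q.1 then X ((p.1 : ℕ) : ℤ) p.2 q.2 else 0)
    (h𝒴 : ∀ p q : Fin (M+1) × Fin N,
      𝒴 p q = if p.1 = q.1 then ((1 + X ((p.1 : ℕ) : ℤ))⁻¹ - 1) p.2 q.2 else 0) :
    (1 - 𝒳 * 𝒯).det = (1 + 𝒳).det * (1 - ((ω : ℂ) ^ 2) • (𝒴 * 𝒯tilde)).det ∧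
      ((1 - 𝒳 * 𝒯).det = 0 ↔ (1 - ((ω : ℂ) ^ 2) • (𝒴 * 𝒯tilde)).det = 0) :=
  stmt_16_general N C hC_cont ω hω M X hX_inv T Ttilde hT hTtilde 𝒯 𝒯tilde 𝒳 𝒴 h𝒯 h𝒯tilde h𝒳 h𝒴
end
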